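/- arXiv:2202.06377 — 5 statements merged into one kernel-verified Lean document; each statement's English description precedes it below -/
import Mathlib

section
/- For the reverse circulant matrix RC_n with entries X_j/√n, Tr[(RC_n)^{2p}] = n^{-(p-1)} · (1/n^0) Σ over A_{2p} of X_{j_1} X_{j_2} ⋯ X_{j_{2p}}, where A_{2p} = {(j_1,...,j_{2p}) ∈ {1,...,n}^{2p} : Σ_{k=1}^{2p} (-1)^k j_k ≡ 0 (mod n)}. -/
open Finset

section PathExpansion

variable {n : ℕ}

private def chain {m : ℕ} (a b : Fin n) (v : Fin m → Fin n) : Fin (m + 2) → Fin n :=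
  Fin.cons a (Fin.snoc v b)

private lemma sum_pi_succ {α : Type*} [AddCommMonoid α] {N : ℕ}
    (F : (Fin (N + 1) → Fin n) → α) :
    ∑ v : Fin (N + 1) → Fin n, F v = ∑ c : Fin n, ∑ v : Fin N → Fin n, F (Fin.cons c v) :=
  calc ∑ v : Fin (N + 1) → Fin n, F v
      = ∑ x : Fin n × (Fin N → Fin n), F (Fin.cons x.1 x.2) :=
        ((Fin.consEquiv (fun _ : Fin (N + 1) => Fin n)).sum_comp F).symm
    _ = ∑ c : Fin n, ∑ v : Fin N → Fin n, F (Fin.cons c v) := Fintype.sum_prod_type _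

private lemma pow_apply_path (M : Matrix (Fin n) (Fin n) ℝ) (m : ℕ) (a b : Fin n) :
    (M ^ (m + 1)) a b = ∑ v : Fin m → Fin n,
      ∏ k : Fin (m + 1), M (chain a b v k.castSucc) (chain a b v k.succ) := by
  induction m generalizing a with
  | zero =>
      simp only [pow_succ, pow_zero, one_mul, Fintype.sum_unique, Fin.prod_univ_succ,
        Fin.prod_univ_zero, mul_one]
      rfl
  | succ m ih =>
      rw [pow_succ', Matrix.mul_apply]
      simp_rw [ih]
      rw [sum_pi_succ]
      refine Finset.sum_congr rfl fun c _ => ?_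
      rw [Finset.mul_sum]
      refine Finset.sum_congr rfl fun v _ => ?_
      have hu : chain a b (Fin.cons c v) = Fin.cons a (chain c b v) := by
        unfold chain
        rw [← Fin.cons_snoc_eq_snoc_cons]
      rw [hu]
      conv_rhs => rw [Fin.prod_univ_succ]
      congr 1

end PathExpansion

private lemma trace_pow_path (M : Matrix (Fin n) (Fin n) ℝ) (m : ℕ) :
    (M ^ (m + 1)).trace = ∑ w : Fin (m + 1) → Fin n,
      ∏ k : Fin (m + 1), M (w k) (w (k + 1)) := by
  rw [Matrix.trace]
  rw [sum_pi_succ (fun w : Fin (m + 1) → Fin n => ∏ k : Fin (m + 1), M (w k) (w (k + 1)))]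
  refine Finset.sum_congr rfl fun a _ => ?_
  rw [Matrix.diag_apply, pow_apply_path M m a a]
  refine Finset.sum_congr rfl fun v _ => ?_
  have hu : chain a a v = Fin.snoc (Fin.cons a v) a := by
    unfold chain
    rw [Fin.cons_snoc_eq_snoc_cons]
  refine Finset.prod_congr rfl fun k _ => ?_
  rw [hu]
  set w : Fin (m + 1) → Fin n := Fin.cons a v with hw
  have h1 : (Fin.snoc w a : Fin (m + 2) → Fin n) k.castSucc = w k := by simp
  have h2 : (Fin.snoc w a : Fin (m + 2) → Fin n) k.succ = w (k + 1) := by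
    rcases eq_or_ne k (Fin.last m) with rfl | hk
    · have : Fin.last m + 1 = 0 := by
        rw [Fin.last_add_one]
      rw [this]
      have : (Fin.last m).succ = Fin.last (m + 1) := by
        ext; simp
      rw [this, Fin.snoc_last, hw, Fin.cons_zero]
    · have hlt : k < Fin.last m := lt_of_le_of_ne (Fin.le_last k) hk
      have : k.succ = (k + 1).castSucc := by
        ext
        rw [Fin.val_succ, Fin.coe_castSucc, Fin.val_add_one_of_lt hlt]
      rw [this, Fin.snoc_castSucc]
  rw [h1, h2]

section Count

open scoped Fin.NatCast Fin.IntCast Fin.CommRing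

variable {n q : ℕ} [NeZero n] [NeZero q]

private def bAux (j : Fin q → Fin n) (a : Fin n) : ℕ → Fin n
  | 0 => a
  | t + 1 => j (t : Fin q) - bAux j a t

private def Ssum (j : Fin q → Fin n) (t : ℕ) : Fin n :=
  ∑ l ∈ Finset.range t, (-1 : Fin n) ^ l * j (l : Fin q)

private lemma bAux_closed (j : Fin q → Fin n) (a : Fin n) (t : ℕ) :
    bAux j a t = (-1) ^ t * (a - Ssum j t) := by
  induction t with
  | zero => simp [bAux, Ssum]
  | succ t ih =>
      rw [show bAux j a (t + 1) = j (t : Fin q) - bAux j a t from rfl, ih]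
      rw [show Ssum j (t + 1) = Ssum j t + (-1 : Fin n) ^ t * j (t : Fin q) from
        Finset.sum_range_succ _ t]
      have h2 : (-1 : Fin n) ^ t * (-1) ^ t = 1 := by
        rw [← pow_add]; exact Even.neg_one_pow ⟨t, rfl⟩
      have h : (-1 : Fin n) ^ (t + 1) = -(-1) ^ t := by rw [pow_succ]; ring
      rw [h]
      linear_combination (-(j (t : Fin q))) * h2

private lemma val_add_one_of_lt' {k : Fin q} (h : k.val + 1 < q) : (k + 1).val = k.val + 1 := by
  have h1 : (1 : Fin q).val = 1 := by
    rw [Fin.val_one']; exact Nat.mod_eq_of_lt (by omega)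
  rw [Fin.val_add, h1, Nat.mod_eq_of_lt h]

private lemma val_add_one_of_eq {k : Fin q} (h : k.val + 1 = q) : (k + 1).val = 0 := by
  rcases Nat.lt_or_ge 1 q with hq | hq
  · have h1 : (1 : Fin q).val = 1 := by
      rw [Fin.val_one']; exact Nat.mod_eq_of_lt hq
    rw [Fin.val_add, h1, h, Nat.mod_self]
  · -- q = 1
    have hq1 : q = 1 := by omega
    subst hq1
    omega

private lemma neg_one_pow_val_add_one (hq2 : Even q) (k : Fin q) :
    (-1 : Fin n) ^ (((k + 1 : Fin q)) : ℕ) = -(-1 : Fin n) ^ (k : ℕ) := by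
  rcases Nat.lt_or_ge (k.val + 1) q with h | h
  · rw [val_add_one_of_lt' h, pow_succ]; ring
  · have hk : k.val + 1 = q := by omega
    rw [val_add_one_of_eq hk, pow_zero]
    have hodd : Odd k.val := by
      rcases hq2 with ⟨r, hr⟩
      exact ⟨r - 1, by omega⟩
    rw [hodd.neg_one_pow]; ring

private lemma sum_alt_J (hq2 : Even q) (w : Fin q → Fin n) :
    ∑ k : Fin q, (-1 : Fin n) ^ (k : ℕ) * (w k + w (k + 1)) = 0 := by
  have key : ∑ k : Fin q, (-1 : Fin n) ^ (k : ℕ) * w (k + 1)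
      = -∑ k : Fin q, (-1 : Fin n) ^ (k : ℕ) * w k := by
    have : ∀ k : Fin q, (-1 : Fin n) ^ (k : ℕ) * w (k + 1)
        = -((-1 : Fin n) ^ (((k + 1 : Fin q)) : ℕ) * w (k + 1)) := by
      intro k; rw [neg_one_pow_val_add_one hq2]; ring
    rw [Finset.sum_congr rfl fun k _ => this k, ← Finset.sum_neg_distrib]
    exact Fintype.sum_equiv (Equiv.addRight (1 : Fin q))
      (fun k => -((-1 : Fin n) ^ (((k + 1 : Fin q)) : ℕ) * w (k + 1)))
      (fun k => -((-1 : Fin n) ^ (k : ℕ) * w k)) (fun k => rfl)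
  calc ∑ k : Fin q, (-1 : Fin n) ^ (k : ℕ) * (w k + w (k + 1))
      = (∑ k : Fin q, (-1 : Fin n) ^ (k : ℕ) * w k)
        + ∑ k : Fin q, (-1 : Fin n) ^ (k : ℕ) * w (k + 1) := by
        rw [← Finset.sum_add_distrib]
        exact Finset.sum_congr rfl fun k _ => by ring
    _ = 0 := by rw [key]; ring

private lemma Ssum_q_eq (j : Fin q → Fin n) :
    Ssum j q = ∑ k : Fin q, (-1 : Fin n) ^ (k : ℕ) * j k := by
  rw [Ssum, ← Fin.sum_univ_eq_sum_range (fun l => (-1 : Fin n) ^ l * j (l : Fin q)) q]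
  exact Finset.sum_congr rfl fun k _ => by rw [Fin.cast_val_eq_self]

private lemma cond_iff (j : Fin q → Fin n) :
    ((n : ℤ) ∣ ∑ k : Fin q, (-1) ^ (k : ℕ) * ((j k : ℕ) : ℤ)) ↔ Ssum j q = 0 := by
  rw [← CharP.intCast_eq_zero_iff (Fin n) n, Ssum_q_eq]
  constructor <;> intro h
  · rw [← h]; push_cast [Fin.cast_val_eq_self]; rfl
  · rw [← h]; push_cast [Fin.cast_val_eq_self]; rfl

private lemma bAux_zero (j : Fin q → Fin n) (a : Fin n) : bAux j a ((0 : Fin q) : ℕ) = a := by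
  rw [Fin.val_zero]
  rfl

private lemma J_build (hq2 : Even q) {j : Fin q → Fin n} (hj : Ssum j q = 0) (a : Fin n)
    (k : Fin q) : bAux j a (k : ℕ) + bAux j a ((k + 1 : Fin q) : ℕ) = j k := by
  rcases Nat.lt_or_ge (k.val + 1) q with h | h
  · rw [val_add_one_of_lt' h,
      show bAux j a (k.val + 1) = j ((k.val : Fin q)) - bAux j a k.val from rfl,
      Fin.cast_val_eq_self]
    ring
  · have hk : k.val + 1 = q := by omega
    rw [val_add_one_of_eq hk, show bAux j a 0 = a from rfl, bAux_closed]
    have hodd : Odd k.val := by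
      rcases hq2 with ⟨r, hr⟩; exact ⟨r - 1, by omega⟩
    rw [hodd.neg_one_pow]
    have hS : Ssum j q = Ssum j k.val + (-1 : Fin n) ^ k.val * j ((k.val : Fin q)) := by
      unfold Ssum
      have h0 := Finset.sum_range_succ (fun l => (-1 : Fin n) ^ l * j (l : Fin q)) k.val
      rw [hk] at h0
      exact h0
    rw [hj, Fin.cast_val_eq_self, hodd.neg_one_pow] at hS
    linear_combination -hS

private lemma build_eq {j w : Fin q → Fin n} (hw : ∀ k, w k + w (k + 1) = j k) :
    ∀ t, (ht : t < q) → bAux j (w 0) t = w ⟨t, ht⟩ := by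
  intro t
  induction t with
  | zero =>
      intro ht
      rw [show bAux j (w 0) 0 = w 0 from rfl]
      exact congrArg w (Fin.ext (by simp))
  | succ t ih =>
      intro ht
      have ht' : t < q := by omega
      rw [show bAux j (w 0) (t + 1) = j ((t : Fin q)) - bAux j (w 0) t from rfl, ih ht']
      have hcast : ((t : ℕ) : Fin q) = ⟨t, ht'⟩ := by
        ext; simp [Fin.val_natCast, Nat.mod_eq_of_lt ht']
      have hsucc : (⟨t, ht'⟩ : Fin q) + 1 = ⟨t + 1, ht⟩ := by
        ext; exact val_add_one_of_lt' (k := ⟨t, ht'⟩) ht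
      rw [hcast, ← hw ⟨t, ht'⟩, hsucc]
      ring

private lemma fiber_count (hq2 : Even q) (j : Fin q → Fin n) :
    (Finset.univ.filter fun w : Fin q → Fin n => (fun k => w k + w (k + 1)) = j).card
      = if (n : ℤ) ∣ ∑ k : Fin q, (-1) ^ (k : ℕ) * ((j k : ℕ) : ℤ) then n else 0 := by
  by_cases hc : (n : ℤ) ∣ ∑ k : Fin q, (-1) ^ (k : ℕ) * ((j k : ℕ) : ℤ)
  · rw [if_pos hc]
    have hj : Ssum j q = 0 := (cond_iff j).mp hc
    have hcard : (Finset.univ : Finset (Fin n)).card = n := by simp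
    refine Eq.trans ?_ hcard
    apply Finset.card_nbij' (i := fun w => w 0) (j := fun a => (fun k : Fin q => bAux j a (k : ℕ)))
    · intro w _; exact Finset.mem_univ _
    · intro a _
      simp only [Finset.coe_filter, Finset.mem_univ, true_and, Set.mem_setOf_eq]
      funext k
      exact J_build hq2 hj a k
    · intro w hw
      simp only [Finset.coe_filter, Finset.mem_univ, true_and, Set.mem_setOf_eq] at hw
      have hw' : ∀ k, w k + w (k + 1) = j k := fun k => congrFun hw k
      funext k
      show bAux j (w 0) k.val = w k
      rw [build_eq hw' k.val k.isLt]
    · intro a _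
      exact bAux_zero j a
  · rw [if_neg hc, Finset.card_eq_zero, Finset.filter_eq_empty_iff]
    intro w _
    intro hEq
    apply hc
    rw [cond_iff]
    rw [← hEq, Ssum_q_eq]
    exact sum_alt_J hq2 w

end Count


open Finset in
/-- Trace formula for even powers of the reverse circulant matrix with entries
`X j / √n` (0-indexed): `Tr (RC_n)^{2p} = n^{-(p-1)} ∑_{A_{2p}} X_{j_1} ⋯ X_{j_{2p}}`,
where `A_{2p}` consists of tuples whose alternating sum is `0 (mod n)`. -/
theorem trace_reverse_circulant_even_pow (n p : ℕ) [NeZero n] (hp : 1 ≤ p)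
    (X : Fin n → ℝ) :
    Matrix.trace ((Matrix.of fun i j : Fin n => X (i + j) / Real.sqrt n) ^ (2 * p)) =
      (1 / (n : ℝ) ^ (p - 1)) *
        ∑ j ∈ Finset.univ.filter (fun j : Fin (2 * p) → Fin n =>
            (n : ℤ) ∣ ∑ k : Fin (2 * p), (-1) ^ (k : ℕ) * ((j k : ℕ) : ℤ)),
          ∏ k : Fin (2 * p), X (j k) := by
  classical
  obtain ⟨m, hm⟩ : ∃ m, 2 * p = m + 1 := ⟨2 * p - 1, by omega⟩
  have hq2 : Even (m + 1) := hm ▸ even_two_mul p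
  haveI : NeZero (m + 1) := ⟨Nat.succ_ne_zero m⟩
  rw [hm, trace_pow_path]
  simp only [Matrix.of_apply]
  have hnp : Real.sqrt n ^ (m + 1) = (n : ℝ) ^ p := by
    rw [← hm, pow_mul, Real.sq_sqrt (by positivity)]
  have hprod : ∀ w : Fin (m + 1) → Fin n,
      ∏ k : Fin (m + 1), X (w k + w (k + 1)) / Real.sqrt n
        = (∏ k : Fin (m + 1), X (w k + w (k + 1))) / (n : ℝ) ^ p := by
    intro w
    rw [Finset.prod_div_distrib, Finset.prod_const, Finset.card_univ, Fintype.card_fin, hnp]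
  rw [Finset.sum_congr rfl fun w _ => hprod w, ← Finset.sum_div]
  have key : ∑ w : Fin (m + 1) → Fin n, ∏ k : Fin (m + 1), X (w k + w (k + 1))
      = (n : ℝ) * ∑ j ∈ Finset.univ.filter (fun j : Fin (m + 1) → Fin n =>
            (n : ℤ) ∣ ∑ k : Fin (m + 1), (-1) ^ (k : ℕ) * ((j k : ℕ) : ℤ)),
          ∏ k : Fin (m + 1), X (j k) := by
    rw [← Finset.sum_fiberwise_of_maps_to
      (g := fun w : Fin (m + 1) → Fin n => (fun k => w k + w (k + 1)))
      (fun w _ => Finset.mem_univ _) (fun w => ∏ k : Fin (m + 1), X (w k + w (k + 1)))]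
    have inner : ∀ j : Fin (m + 1) → Fin n,
        ∑ w ∈ Finset.univ.filter
            (fun w : Fin (m + 1) → Fin n => (fun k => w k + w (k + 1)) = j),
          ∏ k : Fin (m + 1), X (w k + w (k + 1))
        = (if (n : ℤ) ∣ ∑ k : Fin (m + 1), (-1) ^ (k : ℕ) * ((j k : ℕ) : ℤ)
            then (n : ℝ) else 0) * ∏ k : Fin (m + 1), X (j k) := by
      intro j
      have step1 : ∀ w ∈ Finset.univ.filter
          (fun w : Fin (m + 1) → Fin n => (fun k => w k + w (k + 1)) = j),
          ∏ k : Fin (m + 1), X (w k + w (k + 1)) = ∏ k : Fin (m + 1), X (j k) := by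
        intro w hw
        rw [Finset.mem_filter] at hw
        exact Finset.prod_congr rfl fun k _ => by rw [congrFun hw.2 k]
      rw [Finset.sum_congr rfl step1, Finset.sum_const, fiber_count hq2 j, nsmul_eq_mul]
      split_ifs <;> simp
    rw [Finset.sum_congr rfl fun j _ => inner j]
    simp only [ite_mul, zero_mul]
    rw [← Finset.sum_filter, ← Finset.mul_sum]
  rw [key]
  have hn0 : (n : ℝ) ≠ 0 := Nat.cast_ne_zero.mpr (NeZero.ne n)
  have hpow : (n : ℝ) ^ p = (n : ℝ) * (n : ℝ) ^ (p - 1) := by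
    rw [← pow_succ']
    congr 1
    omega
  rw [hpow]
  have hn1 : (n : ℝ) ^ (p - 1) ≠ 0 := pow_ne_zero _ hn0
  field_simp
end

section
/- The number of odd-even pair matched tuples (j_1,...,j_{2p}) in {1,...,n}^{2p} is exactly n(n-1)⋯(n-p+1) · p!, and hence asymptotically n^p · p! as n → ∞. -/
open scoped Classical

/-- A tuple `(j_1, …, j_{2p})` is odd-even pair matched if every value appearing
in it appears exactly twice, once at an odd-indexed and once at an even-indexed
position. -/
def oddEvenPairMatched {n p : ℕ} (j : Fin (2 * p) → Fin n) : Prop :=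
  ∀ k : Fin (2 * p),
    (Finset.univ.filter fun l : Fin (2 * p) => j l = j k ∧ (l : ℕ) % 2 = 0).card = 1 ∧
    (Finset.univ.filter fun l : Fin (2 * p) => j l = j k ∧ (l : ℕ) % 2 = 1).card = 1

namespace OEPM

open Finset

variable {n p : ℕ}

/-- Build a tuple from an embedding (values at even positions) and a permutation
(matching between odd and even positions). -/
def mkTuple (f : Fin p ↪ Fin n) (σ : Equiv.Perm (Fin p)) (k : Fin (2 * p)) : Fin n :=
  if h : (k : ℕ) % 2 = 0 then f ⟨(k : ℕ) / 2, by have := k.2; omega⟩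
  else f (σ ⟨(k : ℕ) / 2, by have := k.2; omega⟩)

lemma mkTuple_even (f : Fin p ↪ Fin n) (σ : Equiv.Perm (Fin p)) (i : Fin p)
    (h : 2 * (i : ℕ) < 2 * p) : mkTuple f σ ⟨2 * i, h⟩ = f i := by
  simp only [mkTuple]
  rw [dif_pos (by omega : (2 * (i : ℕ)) % 2 = 0)]
  congr 1
  apply Fin.ext
  show 2 * (i : ℕ) / 2 = i
  omega

lemma mkTuple_odd (f : Fin p ↪ Fin n) (σ : Equiv.Perm (Fin p)) (i : Fin p)
    (h : 2 * (i : ℕ) + 1 < 2 * p) : mkTuple f σ ⟨2 * i + 1, h⟩ = f (σ i) := by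
  simp only [mkTuple]
  rw [dif_neg (by omega : ¬ (2 * (i : ℕ) + 1) % 2 = 0)]
  congr 2
  apply Fin.ext
  show (2 * (i : ℕ) + 1) / 2 = i
  omega

lemma filter_mkTuple_even (f : Fin p ↪ Fin n) (σ : Equiv.Perm (Fin p)) (i : Fin p) :
    (univ.filter fun l : Fin (2 * p) => mkTuple f σ l = f i ∧ (l : ℕ) % 2 = 0)
      = {⟨2 * i, by have := i.2; omega⟩} := by
  ext l
  simp only [mem_filter, mem_univ, true_and, mem_singleton]
  constructor
  · rintro ⟨hv, he⟩
    rw [show mkTuple f σ l = f ⟨(l : ℕ) / 2, by have := l.2; omega⟩ from by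
      simp only [mkTuple]; rw [dif_pos he]] at hv
    have h3 : (l : ℕ) / 2 = (i : ℕ) := congrArg Fin.val (f.injective hv)
    apply Fin.ext
    show (l : ℕ) = 2 * i
    omega
  · rintro rfl
    refine ⟨mkTuple_even f σ i _, ?_⟩
    show 2 * (i : ℕ) % 2 = 0
    omega

lemma filter_mkTuple_odd (f : Fin p ↪ Fin n) (σ : Equiv.Perm (Fin p)) (i : Fin p) :
    (univ.filter fun l : Fin (2 * p) => mkTuple f σ l = f i ∧ (l : ℕ) % 2 = 1)
      = {⟨2 * (σ.symm i) + 1, by have := (σ.symm i).2; omega⟩} := by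
  ext l
  simp only [mem_filter, mem_univ, true_and, mem_singleton]
  constructor
  · rintro ⟨hv, ho⟩
    rw [show mkTuple f σ l = f (σ ⟨(l : ℕ) / 2, by have := l.2; omega⟩) from by
      simp only [mkTuple]; rw [dif_neg (by omega : ¬ (l : ℕ) % 2 = 0)]] at hv
    have h2 : σ ⟨(l : ℕ) / 2, by have := l.2; omega⟩ = i := f.injective hv
    have h3 := congrArg σ.symm h2
    rw [Equiv.symm_apply_apply] at h3
    have h4 : (l : ℕ) / 2 = ((σ.symm i : Fin p) : ℕ) := congrArg Fin.val h3
    apply Fin.ext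
    show (l : ℕ) = 2 * (σ.symm i : Fin p) + 1
    omega
  · rintro rfl
    refine ⟨?_, ?_⟩
    · rw [mkTuple_odd f σ (σ.symm i) _, Equiv.apply_symm_apply]
    · show (2 * ((σ.symm i : Fin p) : ℕ) + 1) % 2 = 1
      omega

lemma mkTuple_matched (f : Fin p ↪ Fin n) (σ : Equiv.Perm (Fin p)) :
    oddEvenPairMatched (mkTuple f σ) := by
  intro k
  obtain ⟨i, hi⟩ : ∃ i, mkTuple f σ k = f i := by
    by_cases hk : (k : ℕ) % 2 = 0
    · exact ⟨_, by simp only [mkTuple]; rw [dif_pos hk]⟩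
    · exact ⟨_, by simp only [mkTuple]; rw [dif_neg hk]⟩
  constructor
  · simp only [hi]
    rw [filter_mkTuple_even f σ i, card_singleton]
  · simp only [hi]
    rw [filter_mkTuple_odd f σ i, card_singleton]

lemma mkTuple_inj :
    Function.Injective
      (fun x : (Fin p ↪ Fin n) × Equiv.Perm (Fin p) => mkTuple x.1 x.2) := by
  rintro ⟨f, σ⟩ ⟨g, τ⟩ h
  simp only at h
  have hf : f = g := by
    ext i
    have h1 := congrFun h ⟨2 * i, by have := i.2; omega⟩
    rw [mkTuple_even, mkTuple_even] at h1
    exact congrArg Fin.val h1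
  subst hf
  have hσ : σ = τ := by
    apply Equiv.ext
    intro i
    have h1 := congrFun h ⟨2 * i + 1, by have := i.2; omega⟩
    rw [mkTuple_odd, mkTuple_odd] at h1
    exact f.injective h1
  rw [hσ]

lemma exists_pair (j : Fin (2 * p) → Fin n) (h : oddEvenPairMatched j) :
    ∃ x : (Fin p ↪ Fin n) × Equiv.Perm (Fin p), mkTuple x.1 x.2 = j := by
  have jeinj : Function.Injective
      (fun i : Fin p => j ⟨2 * i, by have := i.2; omega⟩) := by
    intro i i' hii
    simp only at hii
    have h1 := Finset.card_le_one.mp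
      (le_of_eq (h ⟨2 * i, by have := i.2; omega⟩).1)
    have e1 : (⟨2 * (i : ℕ), by have := i.2; omega⟩ : Fin (2 * p))
        = ⟨2 * (i' : ℕ), by have := i'.2; omega⟩ := by
      apply h1
      · exact mem_filter.mpr ⟨mem_univ _, rfl, by show 2 * (i : ℕ) % 2 = 0; omega⟩
      · exact mem_filter.mpr ⟨mem_univ _, hii.symm, by show 2 * (i' : ℕ) % 2 = 0; omega⟩
    have e2 : 2 * (i : ℕ) = 2 * (i' : ℕ) := congrArg Fin.val e1
    apply Fin.ext
    omega
  have hmatch : ∀ i : Fin p, ∃ l : Fin (2 * p),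
      j l = j ⟨2 * i + 1, by have := i.2; omega⟩ ∧ (l : ℕ) % 2 = 0 := by
    intro i
    have h1 := (h ⟨2 * i + 1, by have := i.2; omega⟩).1
    rw [Finset.card_eq_one] at h1
    obtain ⟨a, ha⟩ := h1
    have ha2 : a ∈ Finset.univ.filter fun l : Fin (2 * p) =>
        j l = j ⟨2 * i + 1, by have := i.2; omega⟩ ∧ (l : ℕ) % 2 = 0 := by
      rw [ha]; exact mem_singleton_self a
    simp only [mem_filter, mem_univ, true_and] at ha2
    exact ⟨a, ha2⟩
  choose a ha1 ha2 using hmatch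
  set f : Fin p ↪ Fin n := ⟨fun i => j ⟨2 * i, by have := i.2; omega⟩, jeinj⟩ with hfdef
  set t : Fin p → Fin p := fun i => ⟨((a i : Fin (2 * p)) : ℕ) / 2, by
    have := (a i).2; omega⟩ with htdef
  have hft : ∀ i : Fin p, f (t i) = j ⟨2 * i + 1, by have := i.2; omega⟩ := by
    intro i
    show j ⟨2 * ((t i : Fin p) : ℕ), by have := (t i).2; omega⟩ = _
    have hai : (⟨2 * ((t i : Fin p) : ℕ), by have := (t i).2; omega⟩ : Fin (2 * p)) = a i := by
      apply Fin.ext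
      show 2 * (((a i : Fin (2 * p)) : ℕ) / 2) = ((a i : Fin (2 * p)) : ℕ)
      have := ha2 i
      omega
    rw [hai]
    exact ha1 i
  have tinj : Function.Injective t := by
    intro i i' hti
    have hai : a i = a i' := by
      apply Fin.ext
      have h4 : ((a i : Fin (2 * p)) : ℕ) / 2 = ((a i' : Fin (2 * p)) : ℕ) / 2 :=
        congrArg Fin.val hti
      have h5 := ha2 i
      have h6 := ha2 i'
      omega
    have hjj : j ⟨2 * (i' : ℕ) + 1, by have := i'.2; omega⟩
        = j ⟨2 * (i : ℕ) + 1, by have := i.2; omega⟩ := by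
      rw [← ha1 i, ← ha1 i', hai]
    have h1 := Finset.card_le_one.mp
      (le_of_eq (h ⟨2 * i + 1, by have := i.2; omega⟩).2)
    have e1 : (⟨2 * (i : ℕ) + 1, by have := i.2; omega⟩ : Fin (2 * p))
        = ⟨2 * (i' : ℕ) + 1, by have := i'.2; omega⟩ := by
      apply h1
      · exact mem_filter.mpr ⟨mem_univ _, rfl, by show (2 * (i : ℕ) + 1) % 2 = 1; omega⟩
      · exact mem_filter.mpr ⟨mem_univ _, hjj, by show (2 * (i' : ℕ) + 1) % 2 = 1; omega⟩
    have e2 : 2 * (i : ℕ) + 1 = 2 * (i' : ℕ) + 1 := congrArg Fin.val e1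
    apply Fin.ext
    omega
  let σ : Equiv.Perm (Fin p) := Equiv.ofBijective t (Finite.injective_iff_bijective.mp tinj)
  refine ⟨⟨f, σ⟩, ?_⟩
  funext k
  by_cases hk : (k : ℕ) % 2 = 0
  · show mkTuple f σ k = j k
    simp only [mkTuple]
    rw [dif_pos hk]
    show j ⟨2 * ((k : ℕ) / 2), _⟩ = j k
    congr 1
    apply Fin.ext
    show 2 * ((k : ℕ) / 2) = (k : ℕ)
    omega
  · show mkTuple f σ k = j k
    simp only [mkTuple]
    rw [dif_neg hk]
    have hσ : σ ⟨(k : ℕ) / 2, by have := k.2; omega⟩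
        = t ⟨(k : ℕ) / 2, by have := k.2; omega⟩ := rfl
    rw [hσ, hft ⟨(k : ℕ) / 2, by have := k.2; omega⟩]
    congr 1
    apply Fin.ext
    show 2 * ((k : ℕ) / 2) + 1 = (k : ℕ)
    omega

lemma card_eq (n p : ℕ) :
    (Finset.univ.filter fun j : Fin (2 * p) → Fin n => oddEvenPairMatched j).card
      = n.descFactorial p * p.factorial := by
  have key : (Finset.univ.filter fun j : Fin (2 * p) → Fin n => oddEvenPairMatched j).card
      = Fintype.card ((Fin p ↪ Fin n) × Equiv.Perm (Fin p)) := by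
    rw [← Finset.card_univ]
    refine (Finset.card_bij (fun x _ => mkTuple x.1 x.2) ?_ ?_ ?_).symm
    · intro x _
      simp only [mem_filter, mem_univ, true_and]
      exact mkTuple_matched x.1 x.2
    · intro a _ b _ hab
      exact mkTuple_inj hab
    · intro j hj
      simp only [mem_filter, mem_univ, true_and] at hj
      obtain ⟨x, hx⟩ := exists_pair j hj
      exact ⟨x, mem_univ x, hx⟩
  rw [key, Fintype.card_prod, Fintype.card_embedding_eq, Fintype.card_perm,
    Fintype.card_fin, Fintype.card_fin]

end OEPM

/-- The number of odd-even pair matched tuples in `{1,…,n}^{2p}` is exactly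
`n (n-1) ⋯ (n-p+1) · p!`, hence asymptotically `n^p · p!` as `n → ∞`. -/
theorem card_oddEvenPairMatched (p : ℕ) :
    (∀ n : ℕ, p ≤ n →
      (Finset.univ.filter fun j : Fin (2 * p) → Fin n => oddEvenPairMatched j).card
        = (∏ i ∈ Finset.range p, (n - i)) * p.factorial) ∧
    Filter.Tendsto
      (fun n : ℕ =>
        (((Finset.univ.filter fun j : Fin (2 * p) → Fin n =>
            oddEvenPairMatched j).card : ℝ) / (n : ℝ) ^ p))
      Filter.atTop (nhds (p.factorial : ℝ)) := by
  have hcard : ∀ n : ℕ,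
      (Finset.univ.filter fun j : Fin (2 * p) → Fin n => oddEvenPairMatched j).card
        = (∏ i ∈ Finset.range p, (n - i)) * p.factorial := by
    intro n
    rw [OEPM.card_eq n p, Nat.descFactorial_eq_prod_range]
  refine ⟨fun n _ => hcard n, ?_⟩
  have key : (fun n : ℕ =>
      (((Finset.univ.filter fun j : Fin (2 * p) → Fin n =>
          oddEvenPairMatched j).card : ℝ) / (n : ℝ) ^ p))
        =ᶠ[Filter.atTop]
      (fun n : ℕ => (∏ i ∈ Finset.range p, (1 - (i : ℝ) / n)) * p.factorial) := by
    filter_upwards [Filter.eventually_ge_atTop (p + 1)] with n hn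
    have hn0 : (n : ℝ) ≠ 0 := Nat.cast_ne_zero.mpr (by omega)
    have hprod : ((∏ i ∈ Finset.range p, (n - i) : ℕ) : ℝ)
        = ∏ i ∈ Finset.range p, ((n : ℝ) - i) := by
      rw [Nat.cast_prod]
      refine Finset.prod_congr rfl fun i hi => ?_
      rw [Finset.mem_range] at hi
      rw [Nat.cast_sub (by omega : i ≤ n)]
    rw [hcard n, Nat.cast_mul, hprod,
      show ((n : ℝ)) ^ p = ∏ _i ∈ Finset.range p, (n : ℝ) from by
        rw [Finset.prod_const, Finset.card_range],
      mul_div_right_comm, ← Finset.prod_div_distrib]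
    congr 1
    refine Finset.prod_congr rfl fun i _ => ?_
    rw [one_sub_div hn0]
  have hlim : Filter.Tendsto
      (fun n : ℕ => (∏ i ∈ Finset.range p, (1 - (i : ℝ) / n)) * p.factorial)
      Filter.atTop (nhds (p.factorial : ℝ)) := by
    have h1 : Filter.Tendsto (fun n : ℕ => ∏ i ∈ Finset.range p, (1 - (i : ℝ) / n))
        Filter.atTop (nhds (∏ _i ∈ Finset.range p, (1 : ℝ))) := by
      refine tendsto_finset_prod _ fun i _ => ?_
      simpa using tendsto_const_nhds.sub (tendsto_const_div_atTop_nhds_zero_nat (i : ℝ))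
    simpa using h1.mul tendsto_const_nhds
  exact hlim.congr' key.symm
end

section
/- Let X_1, ..., X_n be independent real random variables with mean 0, variance 1, and uniformly bounded moments. For the reverse circulant matrix RC_n with entries X_j/√n, the expected (2p+1)-th moment E[(1/n) Tr (RC_n)^{2p+1}] tends to 0 as n → ∞. -/
open MeasureTheory ProbabilityTheory

namespace RCThmAux

/-! ### Deterministic part : reverse circulant trace identity -/

section Det
variable {n : ℕ} [NeZero n]

def RC (c : Fin n → ℝ) : Matrix (Fin n) (Fin n) ℝ := Matrix.of fun i j => c (i + j)
def Circ (e : Fin n → ℝ) : Matrix (Fin n) (Fin n) ℝ := Matrix.of fun i j => e (j - i)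
def sgn (v : Fin n) : ℝ := (-1 : ℝ) ^ (v : ℕ)

lemma sum_translate (g : Fin n → ℝ) (a : Fin n) : ∑ v, g (a + v) = ∑ v, g v :=
  Equiv.sum_comp (Equiv.addLeft a) g

lemma RC_mul_RC (c d : Fin n → ℝ) :
    RC c * RC d = Circ (fun u => ∑ t, c t * d (t + u)) := by
  ext i j
  simp only [RC, Circ, Matrix.mul_apply, Matrix.of_apply]
  rw [← sum_translate (fun t => c t * d (t + (j - i))) i]
  congr 1; ext k
  congr 1
  abel

lemma Circ_mul_RC (e c : Fin n → ℝ) :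
    Circ e * RC c = RC (fun v => ∑ u, e u * c (u + v)) := by
  ext i j
  simp only [RC, Circ, Matrix.mul_apply, Matrix.of_apply]
  rw [← sum_translate (fun u => e u * c (u + (i + j))) (-i)]
  congr 1; ext k
  congr 1
  · congr 1; abel
  · congr 1; abel

def symIter (c : Fin n → ℝ) : ℕ → (Fin n → ℝ)
  | 0 => c
  | q + 1 => fun v => ∑ u, (∑ t, c t * c (t + u)) * symIter c q (u + v)

lemma RC_pow (c : Fin n → ℝ) (q : ℕ) : (RC c) ^ (2 * q + 1) = RC (symIter c q) := by
  induction q with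
  | zero => simp [symIter]
  | succ q ih =>
      have h : 2 * (q + 1) + 1 = 2 + (2 * q + 1) := by ring
      rw [h, pow_add, pow_two, ih, RC_mul_RC, Circ_mul_RC]
      rfl

lemma trace_RC (g : Fin n → ℝ) : (RC g).trace = ∑ i, g (i + i) := by
  simp [RC, Matrix.trace, Matrix.diag]

lemma phi_symIter (c : Fin n → ℝ) (q : ℕ) :
    ∑ v, symIter c q v = (∑ v, c v) ^ (2 * q + 1) := by
  induction q with
  | zero => simp [symIter]
  | succ q ih =>
      have h1 : ∀ u : Fin n, ∑ v, symIter c q (u + v) = (∑ v, c v) ^ (2 * q + 1) := fun u => by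
        rw [sum_translate, ih]
      calc ∑ v, symIter c (q+1) v
          = ∑ v, ∑ u, (∑ t, c t * c (t + u)) * symIter c q (u + v) := rfl
        _ = ∑ u, ∑ v, (∑ t, c t * c (t + u)) * symIter c q (u + v) := Finset.sum_comm
        _ = ∑ u, (∑ t, c t * c (t + u)) * ((∑ v, c v) ^ (2 * q + 1)) := by
            refine Finset.sum_congr rfl fun u _ => ?_
            rw [← Finset.mul_sum, h1 u]
        _ = (∑ u, ∑ t, c t * c (t + u)) * ((∑ v, c v) ^ (2 * q + 1)) := by
            rw [Finset.sum_mul]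
        _ = (∑ v, c v) ^ (2 * (q+1) + 1) := by
            have h2 : ∑ u, ∑ t, c t * c (t + u) = (∑ v, c v) * (∑ v, c v) := by
              rw [Finset.sum_comm]
              calc ∑ t : Fin n, ∑ u : Fin n, c t * c (t + u)
                  = ∑ t : Fin n, c t * ∑ u, c (t + u) := by
                    refine Finset.sum_congr rfl fun t _ => ?_; rw [Finset.mul_sum]
                _ = ∑ t : Fin n, c t * ∑ v, c v := by
                    refine Finset.sum_congr rfl fun t _ => by rw [sum_translate]
                _ = (∑ v, c v) * (∑ v, c v) := by rw [← Finset.sum_mul]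
            rw [h2]; ring

lemma neg_one_pow_mod (hn : 2 ∣ n) (x : ℕ) : (-1 : ℝ) ^ (x % n) = (-1 : ℝ) ^ x := by
  conv_rhs => rw [← Nat.mod_add_div x n]
  rw [pow_add, pow_mul]
  have h : ((-1 : ℝ) ^ n) = 1 := by
    obtain ⟨k, rfl⟩ := hn
    rw [pow_mul]; norm_num
  rw [h, one_pow, mul_one]

lemma sgn_add (hn : 2 ∣ n) (a b : Fin n) : sgn (a + b) = sgn a * sgn b := by
  have h : ((a + b : Fin n) : ℕ) = ((a : ℕ) + (b : ℕ)) % n := Fin.val_add a b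
  rw [sgn, h, neg_one_pow_mod hn, pow_add]; rfl

lemma sgn_mul_self (a : Fin n) : sgn a * sgn a = 1 := by
  rw [sgn, ← pow_add, ← two_mul, pow_mul]; norm_num

lemma sgn_translate (hn : 2 ∣ n) (h : Fin n → ℝ) (u : Fin n) :
    ∑ v, sgn v * h (u + v) = sgn u * ∑ w, sgn w * h w := by
  have h1 := Equiv.sum_comp (Equiv.addLeft u) (fun w => sgn w * h w)
  rw [← h1, Finset.mul_sum]
  refine Finset.sum_congr rfl fun v _ => ?_
  show sgn v * h (u + v) = sgn u * (sgn (u + v) * h (u + v))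
  rw [sgn_add hn, show sgn u * (sgn u * sgn v * h (u + v))
    = sgn u * sgn u * (sgn v * h (u + v)) from by ring, sgn_mul_self, one_mul]

lemma psi_symIter (hn : 2 ∣ n) (c : Fin n → ℝ) (q : ℕ) :
    ∑ v, sgn v * symIter c q v = (∑ v, sgn v * c v) ^ (2 * q + 1) := by
  induction q with
  | zero => simp [symIter]
  | succ q ih =>
      have key : ∀ u : Fin n, ∑ v, sgn v * symIter c q (u + v)
          = sgn u * (∑ v, sgn v * c v) ^ (2 * q + 1) := fun u => by
        rw [sgn_translate hn (symIter c q) u, ih]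
      calc ∑ v, sgn v * symIter c (q + 1) v
          = ∑ v, ∑ u, (∑ t, c t * c (t + u)) * (sgn v * symIter c q (u + v)) := by
            refine Finset.sum_congr rfl fun v _ => ?_
            show sgn v * ∑ u, (∑ t, c t * c (t + u)) * symIter c q (u + v) = _
            rw [Finset.mul_sum]
            exact Finset.sum_congr rfl fun u _ => by ring
        _ = ∑ u, (∑ t, c t * c (t + u)) * ∑ v, sgn v * symIter c q (u + v) := by
            rw [Finset.sum_comm]
            exact Finset.sum_congr rfl fun u _ => by rw [Finset.mul_sum]
        _ = (∑ u, sgn u * (∑ t, c t * c (t + u))) * (∑ v, sgn v * c v) ^ (2 * q + 1) := by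
            rw [Finset.sum_mul]
            refine Finset.sum_congr rfl fun u _ => ?_
            rw [key u]; ring
        _ = (∑ v, sgn v * c v) ^ (2 * (q + 1) + 1) := by
            have h2 : ∑ u, sgn u * (∑ t, c t * c (t + u)) = (∑ v, sgn v * c v) ^ 2 := by
              calc ∑ u, sgn u * (∑ t, c t * c (t + u))
                  = ∑ t, ∑ u, c t * (sgn u * c (t + u)) := by
                    rw [Finset.sum_comm]
                    refine Finset.sum_congr rfl fun u _ => ?_
                    rw [Finset.mul_sum]
                    exact Finset.sum_congr rfl fun t _ => by ring
                _ = ∑ t, c t * (sgn t * ∑ w, sgn w * c w) := by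
                    refine Finset.sum_congr rfl fun t _ => ?_
                    rw [← Finset.mul_sum, sgn_translate hn c t]
                _ = (∑ v, sgn v * c v) ^ 2 := by
                    have h3 : ∑ t, c t * (sgn t * ∑ w, sgn w * c w)
                        = (∑ t, sgn t * c t) * ∑ w, sgn w * c w := by
                      rw [Finset.sum_mul]
                      exact Finset.sum_congr rfl fun t _ => by ring
                    rw [h3, sq]
            rw [h2, ← pow_add]
            congr 1
            ring

lemma sum_double_odd (hn : ¬ 2 ∣ n) (g : Fin n → ℝ) :
    ∑ i, g (i + i) = ∑ v, g v := by
  have hinj : Function.Injective (fun i : Fin n => i + i) := by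
    intro i j hij
    have hv : ((i : ℕ) + i) % n = ((j : ℕ) + j) % n := by
      simpa [Fin.val_add] using congrArg Fin.val hij
    have hodd : Odd n := Nat.odd_iff.mpr (by omega)
    have hco : Nat.gcd n 2 = 1 := Nat.coprime_two_right.mpr hodd
    have hmod : (i : ℕ) ≡ (j : ℕ) [MOD n] := by
      refine Nat.ModEq.cancel_left_of_coprime hco ?_
      show 2 * (i : ℕ) % n = 2 * (j : ℕ) % n
      simpa [two_mul] using hv
    have h1 : (i : ℕ) % n = (j : ℕ) % n := hmod
    rw [Nat.mod_eq_of_lt i.isLt, Nat.mod_eq_of_lt j.isLt] at h1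
    exact Fin.ext h1
  exact Fintype.sum_bijective _ (Finite.injective_iff_bijective.mp hinj) _ _ (fun i => rfl)

lemma double_eq_zero (hn : 2 ∣ n) (d : Fin n) (h : d + d = 0) :
    d = 0 ∨ d = ⟨n / 2, Nat.div_lt_self (Nat.pos_of_ne_zero (NeZero.ne n)) one_lt_two⟩ := by
  have hv : ((d : ℕ) + d) % n = 0 := by
    simpa [Fin.val_add] using congrArg Fin.val h
  have hlt := d.isLt
  have hn0 : 0 < n := Nat.pos_of_ne_zero (NeZero.ne n)
  obtain ⟨k, hk⟩ := Nat.dvd_of_mod_eq_zero hv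
  have hk2 : k < 2 := by
    by_contra hk2
    push_neg at hk2
    have : n * 2 ≤ n * k := Nat.mul_le_mul_left n hk2
    omega
  interval_cases k
  · left; exact Fin.ext (by simp only [Fin.val_zero]; omega)
  · right
    obtain ⟨m, hm⟩ := hn
    exact Fin.ext (by simp only [Fin.val_mk]; omega)

lemma sum_double_even (hn : 2 ∣ n) (g : Fin n → ℝ) :
    ∑ i, g (i + i) = ∑ v, (1 + sgn v) * g v := by
  classical
  have hn0 : 0 < n := Nat.pos_of_ne_zero (NeZero.ne n)
  have hn2 : 2 ≤ n := by obtain ⟨m, rfl⟩ := hn; omega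
  have key : ∀ v : Fin n,
      ((Finset.univ.filter fun i : Fin n => i + i = v).card : ℝ) = 1 + sgn v := by
    intro v
    rcases Nat.even_or_odd (v : ℕ) with hev | hod
    · have hv2 : (v : ℕ) / 2 < n := lt_of_le_of_lt (Nat.div_le_self _ _) v.isLt
      set i₀ : Fin n := ⟨(v : ℕ) / 2, hv2⟩ with hi₀
      set h₀ : Fin n := ⟨n / 2, Nat.div_lt_self hn0 one_lt_two⟩ with hh₀
      have hdvd2 : 2 ∣ (v : ℕ) := hev.two_dvd
      have hi₀v : i₀ + i₀ = v := by
        apply Fin.ext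
        rw [Fin.val_add]
        simp only [hi₀]
        have h1 : (v : ℕ) / 2 + (v : ℕ) / 2 = (v : ℕ) := by omega
        rw [h1, Nat.mod_eq_of_lt v.isLt]
      have hh₀0 : h₀ + h₀ = 0 := by
        apply Fin.ext
        rw [Fin.val_add]
        simp only [hh₀]
        obtain ⟨m, hm⟩ := hn
        have h1 : n / 2 + n / 2 = n := by omega
        rw [h1, Nat.mod_self]; rfl
      have hne : i₀ ≠ i₀ + h₀ := by
        intro hEq
        have h0 : h₀ = 0 := by
          have := hEq.symm
          rwa [add_eq_left] at this
        have : n / 2 = 0 := congrArg Fin.val h0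
        omega
      have hset : (Finset.univ.filter fun i : Fin n => i + i = v) = {i₀, i₀ + h₀} := by
        ext i
        simp only [Finset.mem_filter, Finset.mem_univ, true_and, Finset.mem_insert,
          Finset.mem_singleton]
        constructor
        · intro hi
          have hd : (i - i₀) + (i - i₀) = 0 := by
            have h2 : (i - i₀) + (i - i₀) = (i + i) - (i₀ + i₀) := by abel
            rw [h2, hi, hi₀v, sub_self]
          rcases double_eq_zero hn _ hd with h0 | hh
          · left
            have h3 : i₀ + (i - i₀) = i := by abel
            rw [← h3, h0, add_zero]
          · right
            have h3 : i₀ + (i - i₀) = i := by abel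
            rw [← h3, hh]
        · rintro (rfl | rfl)
          · exact hi₀v
          · have h2 : (i₀ + h₀) + (i₀ + h₀) = (i₀ + i₀) + (h₀ + h₀) := by abel
            rw [h2, hi₀v, hh₀0, add_zero]
      rw [hset, Finset.card_insert_of_notMem (by simpa using hne), Finset.card_singleton]
      have hs1 : sgn v = 1 := by rw [sgn]; exact hev.neg_one_pow
      rw [hs1]; norm_num
    · have hset : (Finset.univ.filter fun i : Fin n => i + i = v) = ∅ := by
        ext i
        simp only [Finset.mem_filter, Finset.mem_univ, true_and, Finset.notMem_empty,
          iff_false]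
        intro hi
        have hv : ((i : ℕ) + i) % n = (v : ℕ) := by
          simpa [Fin.val_add] using congrArg Fin.val hi
        have hmm : (v : ℕ) % 2 = ((i : ℕ) + i) % 2 := by
          rw [← hv, Nat.mod_mod_of_dvd _ hn]
        have := Nat.odd_iff.mp hod
        omega
      rw [hset]
      have hs1 : sgn v = -1 := by rw [sgn]; exact hod.neg_one_pow
      rw [hs1]; norm_num
  calc ∑ i : Fin n, g (i + i)
      = ∑ v : Fin n, ∑ i ∈ Finset.univ.filter fun i : Fin n => i + i = v, g v :=
        (Finset.sum_fiberwise' Finset.univ (fun i => i + i) g).symm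
    _ = ∑ v : Fin n, (1 + sgn v) * g v := by
        refine Finset.sum_congr rfl fun v _ => ?_
        rw [Finset.sum_const, nsmul_eq_mul, key v]

theorem trace_formula (c : Fin n → ℝ) (p : ℕ) :
    ((RC c) ^ (2 * p + 1)).trace
      = (∑ v, c v) ^ (2 * p + 1)
        + (if 2 ∣ n then (∑ v, sgn v * c v) ^ (2 * p + 1) else 0) := by
  rw [RC_pow, trace_RC]
  by_cases h2 : 2 ∣ n
  · rw [if_pos h2, sum_double_even h2]
    have : ∑ v, (1 + sgn v) * symIter c p v
        = (∑ v, symIter c p v) + ∑ v, sgn v * symIter c p v := by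
      rw [← Finset.sum_add_distrib]
      exact Finset.sum_congr rfl fun v _ => by ring
    rw [this, phi_symIter, psi_symIter h2]
  · rw [if_neg h2, sum_double_odd h2, phi_symIter, add_zero]

end Det

/-! ### Probabilistic part : moment bounds for sums of independent variables -/

section Prob
variable {Ω : Type*} [MeasurableSpace Ω] {μ : Measure Ω} [IsProbabilityMeasure μ]
variable {Y : ℕ → Ω → ℝ}

lemma integrable_pow_single (hm : ∀ j, Measurable (Y j))
    (hint : ∀ j k : ℕ, Integrable (fun ω => |Y j ω| ^ k) μ) (j k : ℕ) :
    Integrable (fun ω => (Y j ω) ^ k) μ := by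
  refine (hint j k).mono' ((hm j).pow_const k).aestronglyMeasurable ?_
  filter_upwards with ω
  rw [Real.norm_eq_abs, abs_pow]

lemma indep_pow_sum (hm : ∀ j, Measurable (Y j))
    (hi : iIndepFun Y μ)
    {t : Finset ℕ} {j : ℕ} (hj : j ∉ t) (a b : ℕ) :
    IndepFun (fun ω => (Y j ω) ^ a) (fun ω => (∑ j' ∈ t, Y j' ω) ^ b) μ := by
  have h1 : IndepFun (Y j) (∑ j' ∈ t, Y j') μ :=
    (hi.indepFun_finset_sum_of_notMem hm hj).symm
  have h2 := h1.comp (measurable_id.pow_const a) (measurable_id.pow_const b)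
  have he : (fun ω => (∑ j' ∈ t, Y j' ω) ^ b) = (fun x : ℝ => x ^ b) ∘ (∑ j' ∈ t, Y j') := by
    funext ω
    simp [Finset.sum_apply]
  rw [he]
  exact h2

lemma integrable_pow_sum (hm : ∀ j, Measurable (Y j))
    (hi : iIndepFun Y μ)
    (hint : ∀ j k : ℕ, Integrable (fun ω => |Y j ω| ^ k) μ) :
    ∀ (s : Finset ℕ) (k : ℕ), Integrable (fun ω => (∑ j ∈ s, Y j ω) ^ k) μ := by
  intro s
  induction s using Finset.induction_on with
  | empty => intro k; simpa using integrable_const ((0 : ℝ) ^ k)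
  | insert a s ha IH =>
      intro k
      have hsplit : (fun ω => (∑ j ∈ insert a s, Y j ω) ^ k)
          = fun ω => ∑ r ∈ Finset.range (k + 1),
              (Y a ω ^ r * (∑ j ∈ s, Y j ω) ^ (k - r) * (k.choose r : ℝ)) := by
        funext ω
        rw [Finset.sum_insert ha, add_pow]
      rw [hsplit]
      refine integrable_finset_sum _ fun r _ => ?_
      refine Integrable.mul_const ?_ _
      exact ((indep_pow_sum hm hi ha r (k - r)).integrable_mul
        (integrable_pow_single hm hint a r) (IH (k - r)))

lemma integrable_mul_pow_sum (hm : ∀ j, Measurable (Y j))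
    (hi : iIndepFun Y μ)
    (hint : ∀ j k : ℕ, Integrable (fun ω => |Y j ω| ^ k) μ)
    {t : Finset ℕ} {j : ℕ} (hj : j ∉ t) (a b : ℕ) :
    Integrable (fun ω => (Y j ω) ^ a * (∑ j' ∈ t, Y j' ω) ^ b) μ :=
  (indep_pow_sum hm hi hj a b).integrable_mul
    (integrable_pow_single hm hint j a) (integrable_pow_sum hm hi hint t b)

lemma integral_mul_pow_sum (hm : ∀ j, Measurable (Y j))
    (hi : iIndepFun Y μ)
    (hint : ∀ j k : ℕ, Integrable (fun ω => |Y j ω| ^ k) μ)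
    {t : Finset ℕ} {j : ℕ} (hj : j ∉ t) (a b : ℕ) :
    ∫ ω, (Y j ω) ^ a * (∑ j' ∈ t, Y j' ω) ^ b ∂μ
      = (∫ ω, (Y j ω) ^ a ∂μ) * ∫ ω, (∑ j' ∈ t, Y j' ω) ^ b ∂μ :=
  (indep_pow_sum hm hi hj a b).integral_fun_mul_eq_mul_integral
    (integrable_pow_single hm hint j a).aestronglyMeasurable
    (integrable_pow_sum hm hi hint t b).aestronglyMeasurable

theorem sum_moment_bound (hm : ∀ j, Measurable (Y j))
    (hi : iIndepFun Y μ)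
    (hint : ∀ j k : ℕ, Integrable (fun ω => |Y j ω| ^ k) μ)
    (h0 : ∀ j, ∫ ω, Y j ω ∂μ = 0)
    (α : ℕ → ℝ) (hα : ∀ j k, ∫ ω, |Y j ω| ^ k ∂μ ≤ α k) :
    ∀ m : ℕ, ∃ C : ℝ, 0 ≤ C ∧ ∀ s : Finset ℕ,
      |∫ ω, (∑ j ∈ s, Y j ω) ^ m ∂μ| ≤ C * (s.card : ℝ) ^ (m / 2) := by
  have hα0 : ∀ k, 0 ≤ α k := fun k =>
    le_trans (integral_nonneg fun ω => by positivity) (hα 0 k)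
  have habs : ∀ j k, |∫ ω, (Y j ω) ^ k ∂μ| ≤ α k := by
    intro j k
    calc |∫ ω, (Y j ω) ^ k ∂μ| ≤ ∫ ω, |(Y j ω) ^ k| ∂μ := by
          simpa [Real.norm_eq_abs] using
            norm_integral_le_integral_norm (fun ω => (Y j ω) ^ k) (μ := μ)
      _ = ∫ ω, |Y j ω| ^ k ∂μ := by simp [abs_pow]
      _ ≤ α k := hα j k
  intro m
  induction m using Nat.strong_induction_on with
  | _ m IH =>
  choose! D hD0 hD using IH
  match m with
  | 0 =>
      refine ⟨1, zero_le_one, fun s => ?_⟩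
      simp
  | 1 =>
      refine ⟨1, zero_le_one, fun s => ?_⟩
      have : ∫ ω, (∑ j ∈ s, Y j ω) ^ 1 ∂μ = 0 := by
        simp only [pow_one]
        rw [integral_finset_sum s (fun j _ => by
          simpa using integrable_pow_single hm hint j 1)]
        simp [h0]
      rw [this]
      simp
  | (m + 2) =>
      set M := m + 2 with hM
      set C : ℝ := ∑ r ∈ Finset.Ico 1 M, ((M - 1).choose r : ℝ) * α (r + 1) * D (M - 1 - r)
        with hC
      have hC0 : 0 ≤ C := by
        refine Finset.sum_nonneg fun r hr => ?_
        have h1 : M - 1 - r < M := by omega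
        exact mul_nonneg (mul_nonneg (by positivity) (hα0 _)) (hD0 _ h1)
      refine ⟨C, hC0, fun s => ?_⟩
      rcases Finset.eq_empty_or_nonempty s with rfl | hs
      · simp only [Finset.sum_empty, Finset.card_empty, Nat.cast_zero]
        rw [zero_pow (by omega : M / 2 ≠ 0), mul_zero]
        rw [zero_pow (by omega : M ≠ 0)]
        simp
      · have hcard1 : (1 : ℝ) ≤ (s.card : ℝ) := by
          exact_mod_cast Nat.one_le_iff_ne_zero.mpr (Finset.card_ne_zero_of_mem hs.choose_spec)
        have hint_term : ∀ j ∈ s, ∀ r : ℕ,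
            Integrable (fun ω => (Y j ω) ^ (r + 1) * (∑ j' ∈ s.erase j, Y j' ω) ^ (M - 1 - r)) μ :=
          fun j hj r => integrable_mul_pow_sum hm hi hint (Finset.notMem_erase j s) _ _
        have key : ∫ ω, (∑ j ∈ s, Y j ω) ^ M ∂μ
            = ∑ j ∈ s, ∑ r ∈ Finset.range M, ((M - 1).choose r : ℝ) *
                ((∫ ω, (Y j ω) ^ (r + 1) ∂μ) *
                 ∫ ω, (∑ j' ∈ s.erase j, Y j' ω) ^ (M - 1 - r) ∂μ) := by
          have hpt : ∀ ω, (∑ j ∈ s, Y j ω) ^ M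
              = ∑ j ∈ s, ∑ r ∈ Finset.range M, ((M - 1).choose r : ℝ) *
                  ((Y j ω) ^ (r + 1) * (∑ j' ∈ s.erase j, Y j' ω) ^ (M - 1 - r)) := by
            intro ω
            have h1 : (∑ j ∈ s, Y j ω) ^ M = ∑ j ∈ s, Y j ω * (∑ j' ∈ s, Y j' ω) ^ (M - 1) := by
              rw [← Finset.sum_mul, ← pow_succ']
              rw [Nat.sub_add_cancel (by omega : 1 ≤ M)]
            rw [h1]
            refine Finset.sum_congr rfl fun j hj => ?_
            have h2 : (∑ j' ∈ s, Y j' ω) = Y j ω + ∑ j' ∈ s.erase j, Y j' ω :=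
              (Finset.add_sum_erase s (fun j' => Y j' ω) hj).symm
            rw [h2, add_pow]
            rw [Finset.mul_sum]
            have h3 : M - 1 + 1 = M := by omega
            refine Finset.sum_congr (by rw [h3]) fun r hr => ?_
            rw [pow_succ]
            ring
          calc ∫ ω, (∑ j ∈ s, Y j ω) ^ M ∂μ
              = ∫ ω, ∑ j ∈ s, ∑ r ∈ Finset.range M, ((M - 1).choose r : ℝ) *
                  ((Y j ω) ^ (r + 1) * (∑ j' ∈ s.erase j, Y j' ω) ^ (M - 1 - r)) ∂μ := by
                exact integral_congr_ae (Filter.Eventually.of_forall hpt)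
            _ = ∑ j ∈ s, ∑ r ∈ Finset.range M, ((M - 1).choose r : ℝ) *
                  ((∫ ω, (Y j ω) ^ (r + 1) ∂μ) *
                   ∫ ω, (∑ j' ∈ s.erase j, Y j' ω) ^ (M - 1 - r) ∂μ) := by
                rw [integral_finset_sum s (fun j hj => integrable_finset_sum _
                  (fun r _ => ((hint_term j hj r).const_mul _)))]
                refine Finset.sum_congr rfl fun j hj => ?_
                rw [integral_finset_sum _ (fun r _ => (hint_term j hj r).const_mul _)]
                refine Finset.sum_congr rfl fun r _ => ?_
                rw [integral_const_mul]
                rw [integral_mul_pow_sum hm hi hint (Finset.notMem_erase j s)]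
        have key2 : ∀ j ∈ s, ∑ r ∈ Finset.range M, ((M - 1).choose r : ℝ) *
                ((∫ ω, (Y j ω) ^ (r + 1) ∂μ) *
                 ∫ ω, (∑ j' ∈ s.erase j, Y j' ω) ^ (M - 1 - r) ∂μ)
            = ∑ r ∈ Finset.Ico 1 M, ((M - 1).choose r : ℝ) *
                ((∫ ω, (Y j ω) ^ (r + 1) ∂μ) *
                 ∫ ω, (∑ j' ∈ s.erase j, Y j' ω) ^ (M - 1 - r) ∂μ) := by
          intro j hj
          rw [Finset.range_eq_Ico, Finset.sum_eq_sum_Ico_succ_bot (by omega : 0 < M)]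
          have h4 : (∫ ω, (Y j ω) ^ (0 + 1) ∂μ) = 0 := by simpa using h0 j
          rw [h4]
          simp
        have bound : ∀ j ∈ s, ∀ r ∈ Finset.Ico 1 M,
            |((M - 1).choose r : ℝ) *
                ((∫ ω, (Y j ω) ^ (r + 1) ∂μ) *
                 ∫ ω, (∑ j' ∈ s.erase j, Y j' ω) ^ (M - 1 - r) ∂μ)|
            ≤ ((M - 1).choose r : ℝ) * α (r + 1) * D (M - 1 - r) * (s.card : ℝ) ^ ((M - 2) / 2) := by
          intro j hj r hr
          rw [Finset.mem_Ico] at hr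
          have hlt : M - 1 - r < M := by omega
          have hDr := hD _ hlt (s.erase j)
          have hcard_le : ((s.erase j).card : ℝ) ≤ (s.card : ℝ) := by
            exact_mod_cast Finset.card_erase_le
          have hcard0 : (0 : ℝ) ≤ ((s.erase j).card : ℝ) := by positivity
          have hpow : ((s.erase j).card : ℝ) ^ ((M - 1 - r) / 2)
              ≤ (s.card : ℝ) ^ ((M - 2) / 2) := by
            calc ((s.erase j).card : ℝ) ^ ((M - 1 - r) / 2)
                ≤ (s.card : ℝ) ^ ((M - 1 - r) / 2) := by
                  exact pow_le_pow_left₀ hcard0 hcard_le _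
              _ ≤ (s.card : ℝ) ^ ((M - 2) / 2) := by
                  exact pow_le_pow_right₀ hcard1 (by omega)
          have h2 : |∫ ω, (∑ j' ∈ s.erase j, Y j' ω) ^ (M - 1 - r) ∂μ|
              ≤ D (M - 1 - r) * (s.card : ℝ) ^ ((M - 2) / 2) := by
            refine le_trans hDr ?_
            exact mul_le_mul_of_nonneg_left hpow (hD0 _ hlt)
          rw [abs_mul, abs_mul]
          have hc : |((M - 1).choose r : ℝ)| = ((M - 1).choose r : ℝ) :=
            abs_of_nonneg (by positivity)
          rw [hc]
          calc ((M - 1).choose r : ℝ) * (|∫ ω, (Y j ω) ^ (r + 1) ∂μ| *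
                  |∫ ω, (∑ j' ∈ s.erase j, Y j' ω) ^ (M - 1 - r) ∂μ|)
              ≤ ((M - 1).choose r : ℝ) * (α (r + 1) * (D (M - 1 - r) *
                  (s.card : ℝ) ^ ((M - 2) / 2))) := by
                refine mul_le_mul_of_nonneg_left ?_ (by positivity)
                refine mul_le_mul (habs j (r+1)) h2 (abs_nonneg _) (hα0 _)
            _ = ((M - 1).choose r : ℝ) * α (r + 1) * D (M - 1 - r) *
                  (s.card : ℝ) ^ ((M - 2) / 2) := by
                ring
        rw [key]
        calc |∑ j ∈ s, ∑ r ∈ Finset.range M, ((M - 1).choose r : ℝ) *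
                ((∫ ω, (Y j ω) ^ (r + 1) ∂μ) *
                 ∫ ω, (∑ j' ∈ s.erase j, Y j' ω) ^ (M - 1 - r) ∂μ)|
            ≤ ∑ j ∈ s, |∑ r ∈ Finset.range M, ((M - 1).choose r : ℝ) *
                ((∫ ω, (Y j ω) ^ (r + 1) ∂μ) *
                 ∫ ω, (∑ j' ∈ s.erase j, Y j' ω) ^ (M - 1 - r) ∂μ)| :=
              Finset.abs_sum_le_sum_abs _ _
          _ ≤ ∑ j ∈ s, C * (s.card : ℝ) ^ ((M - 2) / 2) := by
              refine Finset.sum_le_sum fun j hj => ?_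
              rw [key2 j hj]
              refine le_trans (Finset.abs_sum_le_sum_abs _ _) ?_
              rw [hC, Finset.sum_mul]
              exact Finset.sum_le_sum fun r hr => bound j hj r hr
          _ = (s.card : ℝ) * (C * (s.card : ℝ) ^ ((M - 2) / 2)) := by
              rw [Finset.sum_const, nsmul_eq_mul]
          _ = C * (s.card : ℝ) ^ (M / 2) := by
              have h5 : M / 2 = (M - 2) / 2 + 1 := by omega
              rw [h5, pow_succ]
              ring

end Prob

end RCThmAux

open MeasureTheory ProbabilityTheory in
/-- For independent entries with mean 0, variance 1 and uniformly bounded moments,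
the expected `odd moment of the empirical spectral distribution of the
reverse circulant matrix with entries `X_j/√n` tends to 0. -/
theorem reverse_circulant_expected_odd_moment {Ω : Type*} [MeasurableSpace Ω]
    (μ : Measure Ω) [IsProbabilityMeasure μ]
    (X : ℕ → Ω → ℝ) (hmeas : ∀ j, Measurable (X j))
    (hindep : iIndepFun X μ)
    (hmean : ∀ j, ∫ ω, X j ω ∂μ = 0)
    (hvar : ∀ j, ∫ ω, (X j ω) ^ 2 ∂μ = 1)
    (hint : ∀ j k : ℕ, Integrable (fun ω => |X j ω| ^ k) μ)
    (hmom : ∀ k : ℕ, 3 ≤ k → ∃ α : ℝ, ∀ j, ∫ ω, |X j ω| ^ k ∂μ ≤ α)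
    (p : ℕ) :
    Filter.Tendsto
      (fun n : ℕ => ∫ ω,
        (1 / (n : ℝ)) * Matrix.trace
          ((Matrix.of fun i j : Fin n =>
            X ((i + j : Fin n) : ℕ) ω / Real.sqrt n) ^ (2 * p + 1)) ∂μ)
      Filter.atTop (nhds (0 : ℝ)) := by
  classical
  open RCThmAux in
  set m := 2 * p + 1 with hmdef
  -- a uniform moment bound
  have hα_ex : ∃ α : ℕ → ℝ, ∀ j k, ∫ ω, |X j ω| ^ k ∂μ ≤ α k := by
    choose! β hβ using hmom
    refine ⟨fun k => if 3 ≤ k then β k else 2, fun j k => ?_⟩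
    by_cases h3 : 3 ≤ k
    · simp only [if_pos h3]; exact hβ k h3 j
    · simp only [if_neg h3]
      interval_cases k
      · simp
      · -- k = 1 : |x| ≤ 1 + x²
        have hle : ∀ ω, |X j ω| ^ 1 ≤ 1 + |X j ω| ^ 2 := by
          intro ω
          have := abs_nonneg (X j ω)
          nlinarith [sq_nonneg (|X j ω| - 1)]
        calc ∫ ω, |X j ω| ^ 1 ∂μ ≤ ∫ ω, (1 + |X j ω| ^ 2) ∂μ :=
              integral_mono (hint j 1) ((integrable_const 1).add (hint j 2)) hle
          _ = 1 + ∫ ω, |X j ω| ^ 2 ∂μ := by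
              rw [integral_add (integrable_const 1) (hint j 2)]
              simp
          _ = 2 := by
              have : ∫ ω, |X j ω| ^ 2 ∂μ = 1 := by
                rw [← hvar j]
                exact integral_congr_ae (Filter.Eventually.of_forall fun ω =>
                  (sq_abs (X j ω)))
              rw [this]; norm_num
      · -- k = 2
        have : ∫ ω, |X j ω| ^ 2 ∂μ = 1 := by
          rw [← hvar j]
          exact integral_congr_ae (Filter.Eventually.of_forall fun ω => (sq_abs (X j ω)))
        rw [this]; norm_num
  obtain ⟨α, hα⟩ := hα_ex
  obtain ⟨C₁, hC₁0, hC₁⟩ := sum_moment_bound hmeas hindep hint hmean α hα m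
  -- the alternating-sign family
  set Z : ℕ → Ω → ℝ := fun j ω => (-1 : ℝ) ^ j * X j ω with hZ
  have hmeasZ : ∀ j, Measurable (Z j) := fun j => (hmeas j).const_mul _
  have hindepZ : iIndepFun Z μ := by
    have := hindep.comp (fun j (x : ℝ) => (-1 : ℝ) ^ j * x)
      (fun j => measurable_id.const_mul _)
    exact this
  have habsZ : ∀ j k, (fun ω => |Z j ω| ^ k) = fun ω => |X j ω| ^ k := by
    intro j k
    funext ω
    rw [hZ]
    simp only [abs_mul, abs_pow, abs_neg, abs_one, one_pow, one_mul]
  have hintZ : ∀ j k : ℕ, Integrable (fun ω => |Z j ω| ^ k) μ := fun j k => by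
    rw [habsZ]; exact hint j k
  have hmeanZ : ∀ j, ∫ ω, Z j ω ∂μ = 0 := fun j => by
    rw [hZ]
    simp only []
    rw [integral_const_mul, hmean j, mul_zero]
  have hαZ : ∀ j k, ∫ ω, |Z j ω| ^ k ∂μ ≤ α k := fun j k => by
    rw [habsZ]; exact hα j k
  obtain ⟨C₂, hC₂0, hC₂⟩ := sum_moment_bound hmeasZ hindepZ hintZ hmeanZ α hαZ m
  -- squeeze
  refine squeeze_zero_norm' ?_
    (tendsto_const_div_atTop_nhds_zero_nat (C₁ + C₂))
  filter_upwards [Filter.eventually_ge_atTop 1] with n hn1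
  haveI : NeZero n := ⟨by omega⟩
  have hn0 : (0 : ℝ) < n := by exact_mod_cast hn1
  have hsqrt1 : (1 : ℝ) ≤ Real.sqrt n := by
    rw [show (1 : ℝ) = Real.sqrt 1 by simp]
    exact Real.sqrt_le_sqrt (by exact_mod_cast hn1)
  have hsqrt0 : (0 : ℝ) < Real.sqrt n := lt_of_lt_of_le one_pos hsqrt1
  set Sf : Ω → ℝ := fun ω => ∑ j ∈ Finset.range n, X j ω with hSf
  set Tf : Ω → ℝ := fun ω => ∑ j ∈ Finset.range n, Z j ω with hTf
  -- pointwise trace identity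
  have hpt : ∀ ω, (1 / (n : ℝ)) * Matrix.trace
        ((Matrix.of fun i j : Fin n => X ((i + j : Fin n) : ℕ) ω / Real.sqrt n) ^ m)
      = (1 / (n : ℝ)) * ((Sf ω) ^ m / (Real.sqrt n) ^ m
        + (if 2 ∣ n then (Tf ω) ^ m / (Real.sqrt n) ^ m else 0)) := by
    intro ω
    set c : Fin n → ℝ := fun v => X (v : ℕ) ω / Real.sqrt n with hc
    have hMeq : (Matrix.of fun i j : Fin n => X ((i + j : Fin n) : ℕ) ω / Real.sqrt n)
        = RC c := rfl
    rw [hMeq, hmdef, trace_formula c p]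
    have hS : ∑ v : Fin n, c v = Sf ω / Real.sqrt n := by
      rw [hc, ← Finset.sum_div, hSf]
      congr 1
      exact Fin.sum_univ_eq_sum_range (fun j => X j ω) n
    have hT : ∑ v : Fin n, sgn v * c v = Tf ω / Real.sqrt n := by
      have h1 : Tf ω = ∑ v : Fin n, (-1 : ℝ) ^ (v : ℕ) * X (v : ℕ) ω :=
        (Fin.sum_univ_eq_sum_range (fun j => (-1 : ℝ) ^ j * X j ω) n).symm
      rw [h1, Finset.sum_div]
      refine Finset.sum_congr rfl fun v _ => ?_
      show (-1 : ℝ) ^ (v : ℕ) * (X (v : ℕ) ω / Real.sqrt n)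
        = ((-1 : ℝ) ^ (v : ℕ) * X (v : ℕ) ω) / Real.sqrt n
      ring
    rw [hS, hT, div_pow, div_pow]
  have hintS : Integrable (fun ω => (Sf ω) ^ m / (Real.sqrt n) ^ m) μ :=
    (integrable_pow_sum hmeas hindep hint (Finset.range n) m).div_const _
  have hintT : Integrable (fun ω => (Tf ω) ^ m / (Real.sqrt n) ^ m) μ :=
    (integrable_pow_sum hmeasZ hindepZ hintZ (Finset.range n) m).div_const _
  -- compute the integral
  have hval : ∫ ω, (1 / (n : ℝ)) * Matrix.trace
        ((Matrix.of fun i j : Fin n => X ((i + j : Fin n) : ℕ) ω / Real.sqrt n) ^ m) ∂μ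
      = (1 / (n : ℝ)) * (((∫ ω, (Sf ω) ^ m ∂μ)
          + (if 2 ∣ n then ∫ ω, (Tf ω) ^ m ∂μ else 0)) / (Real.sqrt n) ^ m) := by
    rw [integral_congr_ae (Filter.Eventually.of_forall hpt), integral_const_mul]
    congr 1
    by_cases h2 : 2 ∣ n
    · simp only [if_pos h2]
      rw [integral_add hintS hintT, integral_div, integral_div, ← add_div]
    · simp only [if_neg h2]
      simp only [add_zero]
      rw [integral_div]
  rw [hval]
  -- bound
  have hA : |∫ ω, (Sf ω) ^ m ∂μ| ≤ C₁ * (n : ℝ) ^ p := by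
    have := hC₁ (Finset.range n)
    rwa [Finset.card_range, show m / 2 = p by omega] at this
  have hB : |(if 2 ∣ n then ∫ ω, (Tf ω) ^ m ∂μ else 0)| ≤ C₂ * (n : ℝ) ^ p := by
    by_cases h2 : 2 ∣ n
    · simp only [if_pos h2]
      have := hC₂ (Finset.range n)
      rwa [Finset.card_range, show m / 2 = p by omega] at this
    · simp only [if_neg h2, abs_zero]
      positivity
  have hsqm : (Real.sqrt n) ^ m = (n : ℝ) ^ p * Real.sqrt n := by
    rw [hmdef, pow_succ, pow_mul, Real.sq_sqrt (le_of_lt hn0)]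
  have hnp0 : (0 : ℝ) < (n : ℝ) ^ p := by positivity
  rw [Real.norm_eq_abs, abs_mul, abs_of_nonneg (by positivity : (0:ℝ) ≤ 1 / (n:ℝ)), abs_div,
    abs_of_nonneg (by positivity : (0:ℝ) ≤ (Real.sqrt n) ^ m)]
  calc (1 / (n : ℝ)) * (|(∫ ω, (Sf ω) ^ m ∂μ)
          + (if 2 ∣ n then ∫ ω, (Tf ω) ^ m ∂μ else 0)| / (Real.sqrt n) ^ m)
      ≤ (1 / (n : ℝ)) * (((C₁ + C₂) * (n : ℝ) ^ p) / (Real.sqrt n) ^ m) := by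
        refine mul_le_mul_of_nonneg_left ?_ (by positivity)
        refine div_le_div_of_nonneg_right ?_ (by positivity)
        calc |(∫ ω, (Sf ω) ^ m ∂μ) + (if 2 ∣ n then ∫ ω, (Tf ω) ^ m ∂μ else 0)|
            ≤ |∫ ω, (Sf ω) ^ m ∂μ| + |(if 2 ∣ n then ∫ ω, (Tf ω) ^ m ∂μ else 0)| :=
              abs_add_le _ _
          _ ≤ C₁ * (n : ℝ) ^ p + C₂ * (n : ℝ) ^ p := add_le_add hA hB
          _ = (C₁ + C₂) * (n : ℝ) ^ p := by ring
    _ = (1 / (n : ℝ)) * ((C₁ + C₂) / Real.sqrt n) := by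
        rw [hsqm]
        field_simp
    _ ≤ (1 / (n : ℝ)) * (C₁ + C₂) := by
        refine mul_le_mul_of_nonneg_left ?_ (by positivity)
        rw [div_le_iff₀ hsqrt0]
        nlinarith
    _ = (C₁ + C₂) / n := by ring
end

section
/- The number of opposite sign pair matched tuples in C_{2p} with entries from {1,...,⌊n/2⌋}, counted over all choices of signs, is asymptotically (n^p / 2^p) · binomial(2p, p) · p! = n^p (2p)!/(2^p p!) as n → ∞. -/
open scoped Classical
open Finset

private def Matched (p m : ℕ) (q : (Fin (2 * p) → Bool) × (Fin (2 * p) → Fin m)) : Prop :=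
  ∀ k : Fin (2 * p),
    (Finset.univ.filter fun l : Fin (2 * p) => q.2 l = q.2 k ∧ q.1 l = true).card = 1 ∧
    (Finset.univ.filter fun l : Fin (2 * p) => q.2 l = q.2 k ∧ q.1 l = false).card = 1

private lemma matched_sum_zero {p m : ℕ} {q : (Fin (2 * p) → Bool) × (Fin (2 * p) → Fin m)}
    (hq : Matched p m q) :
    ∑ k : Fin (2 * p), (if q.1 k then 1 else -1 : ℤ) * (((q.2 k : ℕ) : ℤ) + 1) = 0 := by
  rw [← Finset.sum_fiberwise_of_maps_to (t := (univ : Finset (Fin m))) (g := q.2)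
    (fun i _ => mem_univ _)]
  apply Finset.sum_eq_zero
  intro v _
  rcases (univ.filter fun k => q.2 k = v).eq_empty_or_nonempty with he | ⟨k0, hk0⟩
  · rw [he, Finset.sum_empty]
  · have hk0' : q.2 k0 = v := (mem_filter.mp hk0).2
    have hsum : ∀ k ∈ univ.filter fun k => q.2 k = v,
        (if q.1 k then 1 else -1 : ℤ) * (((q.2 k : ℕ) : ℤ) + 1)
          = (if q.1 k = true then ((v : ℕ) : ℤ) + 1 else -(((v : ℕ) : ℤ) + 1)) := by
      intro k hk
      have : q.2 k = v := (mem_filter.mp hk).2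
      rw [this]
      by_cases h : q.1 k <;> simp [h]
    rw [Finset.sum_congr rfl hsum,
      ← Finset.sum_filter_add_sum_filter_not (univ.filter fun k => q.2 k = v)
        (fun k => q.1 k = true)]
    have h1 : ((univ.filter fun k => q.2 k = v).filter fun k => q.1 k = true)
        = univ.filter fun l => q.2 l = q.2 k0 ∧ q.1 l = true := by
      rw [Finset.filter_filter, hk0']
    have h2 : ((univ.filter fun k => q.2 k = v).filter fun k => ¬(q.1 k = true))
        = univ.filter fun l => q.2 l = q.2 k0 ∧ q.1 l = false := by
      rw [Finset.filter_filter, hk0']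
      exact Finset.filter_congr (fun l _ => by simp [Bool.not_eq_true])
    have c1 := (hq k0).1
    have c2 := (hq k0).2
    rw [Finset.sum_congr h1 (fun x hx => if_pos (mem_filter.mp hx).2.2),
      Finset.sum_congr h2 (fun x hx => if_neg (by simp [(mem_filter.mp hx).2.2])),
      Finset.sum_const, Finset.sum_const, c1, c2]
    ring

private lemma matched_injective {p m : ℕ} {q : (Fin (2 * p) → Bool) × (Fin (2 * p) → Fin m)}
    (hq : Matched p m q) {k l : Fin (2 * p)} (h2 : q.2 k = q.2 l) (h1 : q.1 k = q.1 l) :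
    k = l := by
  by_cases hb : q.1 k = true
  · have hc := (hq k).1
    refine Finset.card_le_one.mp (le_of_eq hc) k ?_ l ?_ <;>
      simp [mem_filter, hb, h2.symm, ← h1, hb]
  · have hc := (hq k).2
    have hb' : q.1 k = false := by simpa using hb
    refine Finset.card_le_one.mp (le_of_eq hc) k ?_ l ?_ <;>
      simp [mem_filter, hb', h2.symm, ← h1]

private lemma matched_image_card {p m : ℕ} {q : (Fin (2 * p) → Bool) × (Fin (2 * p) → Fin m)}
    (hq : Matched p m q) : (Finset.univ.image q.2).card = p := by
  have hfib : ∀ v ∈ Finset.univ.image q.2, (univ.filter fun k => q.2 k = v).card = 2 := by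
    intro v hv
    obtain ⟨k0, _, hk0⟩ := Finset.mem_image.mp hv
    have hsplit := Finset.card_filter_add_card_filter_not
      (s := univ.filter fun k => q.2 k = v) (p := fun k => q.1 k = true)
    have h1 : ((univ.filter fun k => q.2 k = v).filter fun k => q.1 k = true)
        = univ.filter fun l => q.2 l = q.2 k0 ∧ q.1 l = true := by
      rw [Finset.filter_filter, hk0]
    have h2 : ((univ.filter fun k => q.2 k = v).filter fun k => ¬(q.1 k = true))
        = univ.filter fun l => q.2 l = q.2 k0 ∧ q.1 l = false := by
      rw [Finset.filter_filter, hk0]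
      exact Finset.filter_congr (fun l _ => by simp [Bool.not_eq_true])
    rw [h1, h2, (hq k0).1, (hq k0).2] at hsplit
    omega
  have := Finset.card_eq_sum_card_fiberwise
    (f := q.2) (s := univ) (t := Finset.univ.image q.2)
    (fun x _ => Finset.mem_image_of_mem _ (mem_univ x))
  rw [Finset.sum_congr rfl hfib, Finset.sum_const, smul_eq_mul] at this
  simp only [Finset.card_univ, Fintype.card_fin] at this
  omega

private noncomputable def matchedEquiv (p m : ℕ) (V : Finset (Fin m)) (hV : V.card = p) :
    {q : (Fin (2 * p) → Bool) × (Fin (2 * p) → Fin m) //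
      Matched p m q ∧ Finset.univ.image q.2 = V} ≃ (Fin (2 * p) ≃ (↥V × Bool)) where
  toFun := fun ⟨q, hq, hV'⟩ => Equiv.ofBijective
    (fun k => (⟨q.2 k, hV' ▸ Finset.mem_image_of_mem q.2 (mem_univ k)⟩, q.1 k))
    (by
      refine (Fintype.bijective_iff_injective_and_card _).mpr ⟨?_, by
        simp [Fintype.card_coe, hV]; ring⟩
      intro k l h
      exact matched_injective hq (congrArg (fun x => x.1.1) h) (congrArg Prod.snd h))
  invFun := fun σ => ⟨⟨fun k => (σ k).2, fun k => ((σ k).1 : Fin m)⟩, by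
    constructor
    · intro k
      constructor
      · have : (univ.filter fun l : Fin (2 * p) =>
            (((σ l).1 : Fin m) = ((σ k).1 : Fin m)) ∧ (σ l).2 = true)
            = {σ.symm ((σ k).1, true)} := by
          ext l
          simp only [mem_filter, mem_univ, true_and, Finset.mem_singleton]
          constructor
          · rintro ⟨ha, hb⟩
            have : σ l = ((σ k).1, true) := Prod.ext (Subtype.ext ha) hb
            rw [← this, Equiv.symm_apply_apply]
          · rintro rfl; simp
        rw [this, Finset.card_singleton]
      · have : (univ.filter fun l : Fin (2 * p) =>
            (((σ l).1 : Fin m) = ((σ k).1 : Fin m)) ∧ (σ l).2 = false)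
            = {σ.symm ((σ k).1, false)} := by
          ext l
          simp only [mem_filter, mem_univ, true_and, Finset.mem_singleton]
          constructor
          · rintro ⟨ha, hb⟩
            have : σ l = ((σ k).1, false) := Prod.ext (Subtype.ext ha) hb
            rw [← this, Equiv.symm_apply_apply]
          · rintro rfl; simp
        rw [this, Finset.card_singleton]
    · ext v
      simp only [Finset.mem_image, mem_univ, true_and]
      constructor
      · rintro ⟨k, rfl⟩; exact ((σ k).1).2
      · intro hv
        exact ⟨σ.symm (⟨v, hv⟩, true), by simp⟩⟩
  left_inv := fun x => by
    obtain ⟨⟨e, j⟩, h1, h2⟩ := x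
    rfl
  right_inv := fun σ => by
    ext k <;> rfl

private lemma card_matched (p m : ℕ) :
    (Finset.univ.filter (Matched p m)).card = m.choose p * (2 * p).factorial := by
  have hmaps : ∀ q ∈ Finset.univ.filter (Matched p m),
      Finset.univ.image q.2 ∈ Finset.powersetCard p (univ : Finset (Fin m)) := by
    intro q hq
    exact Finset.mem_powersetCard.mpr ⟨Finset.subset_univ _,
      matched_image_card (mem_filter.mp hq).2⟩
  rw [Finset.card_eq_sum_card_fiberwise hmaps]
  have hfib : ∀ V ∈ Finset.powersetCard p (univ : Finset (Fin m)),
      ((Finset.univ.filter (Matched p m)).filter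
        fun q => Finset.univ.image q.2 = V).card = (2 * p).factorial := by
    intro V hVmem
    have hV : V.card = p := (Finset.mem_powersetCard.mp hVmem).2
    rw [Finset.filter_filter, ← Fintype.card_subtype]
    rw [Fintype.card_congr (matchedEquiv p m V hV)]
    have hcards : Fintype.card (Fin (2 * p)) = Fintype.card (↥V × Bool) := by
      simp [Fintype.card_coe, hV]; ring
    rw [Fintype.card_equiv (Fintype.equivOfCardEq hcards), Fintype.card_fin]
  rw [Finset.sum_congr rfl hfib, Finset.sum_const, smul_eq_mul,
    Finset.card_powersetCard, Finset.card_univ, Fintype.card_fin]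

private lemma tendsto_half : Filter.Tendsto (fun n : ℕ => ((n / 2 : ℕ) : ℝ) / n)
    Filter.atTop (nhds (1 / 2)) := by
  have key : Filter.Tendsto (fun n : ℕ => 1 / 2 - ((n % 2 : ℕ) : ℝ) / (2 * n))
      Filter.atTop (nhds (1 / 2)) := by
    have h0 : Filter.Tendsto (fun n : ℕ => ((n % 2 : ℕ) : ℝ) / (2 * n))
        Filter.atTop (nhds 0) := by
      apply squeeze_zero' (g := fun n : ℕ => 1 / (n : ℝ))
      · filter_upwards with n
        positivity
      · filter_upwards [Filter.eventually_ge_atTop 1] with n hn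
        have hn' : (1 : ℝ) ≤ n := by exact_mod_cast hn
        have h1 : ((n % 2 : ℕ) : ℝ) ≤ 1 := by
          have := Nat.mod_lt n (show 0 < 2 by norm_num)
          exact_mod_cast Nat.lt_succ_iff.mp this
        have h2 : (n : ℝ) ≤ 2 * n := by linarith
        calc ((n % 2 : ℕ) : ℝ) / (2 * n) ≤ 1 / (2 * n) := by
              apply div_le_div_of_nonneg_right h1 (by linarith) |>.trans_eq rfl
          _ ≤ 1 / n := by
              apply one_div_le_one_div_of_le (by linarith) h2
      · exact tendsto_one_div_atTop_nhds_zero_nat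
    simpa using (tendsto_const_nhds (x := (1 / 2 : ℝ))).sub h0
  apply key.congr'
  filter_upwards [Filter.eventually_ge_atTop 1] with n hn
  have hn0 : (n : ℝ) ≠ 0 := by positivity
  have hmod : (2 : ℝ) * ((n / 2 : ℕ) : ℝ) + ((n % 2 : ℕ) : ℝ) = (n : ℝ) := by
    exact_mod_cast Nat.div_add_mod n 2
  field_simp
  linear_combination (-1 : ℝ) * hmod

private lemma tendsto_sub_div (i : ℕ) :
    Filter.Tendsto (fun n : ℕ => ((n / 2 - i : ℕ) : ℝ) / n)
      Filter.atTop (nhds (1 / 2)) := by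
  have key : Filter.Tendsto (fun n : ℕ => ((n / 2 : ℕ) : ℝ) / n - (i : ℝ) / n)
      Filter.atTop (nhds (1 / 2)) := by
    simpa using tendsto_half.sub (tendsto_const_div_atTop_nhds_zero_nat (i : ℝ))
  apply key.congr'
  filter_upwards [Filter.eventually_ge_atTop (2 * (i + 1))] with n hn
  have hi : i ≤ n / 2 := by omega
  rw [Nat.cast_sub hi, sub_div]

/-- The number of opposite sign pair matched tuples in `C_{2p}` (entries from
`{1,…,⌊n/2⌋}`), counted over all choices of signs, is asymptotically
`n^p (2p)!/(2^p p!)` as `n → ∞`. -/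
theorem card_oppositeSignPairMatched_asymptotic (p : ℕ) :
    Filter.Tendsto
      (fun n : ℕ =>
        (((Finset.univ.filter
            fun q : (Fin (2 * p) → Bool) × (Fin (2 * p) → Fin (n / 2)) =>
              ((n : ℤ) ∣ ∑ k : Fin (2 * p),
                  (if q.1 k then 1 else -1) * (((q.2 k : ℕ) : ℤ) + 1)) ∧
              ∀ k : Fin (2 * p),
                (Finset.univ.filter fun l : Fin (2 * p) =>
                  q.2 l = q.2 k ∧ q.1 l = true).card = 1 ∧
                (Finset.univ.filter fun l : Fin (2 * p) =>
                  q.2 l = q.2 k ∧ q.1 l = false).card = 1).card : ℝ)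
          / (n : ℝ) ^ p))
      Filter.atTop (nhds (((2 * p).factorial : ℝ) / (2 ^ p * (p.factorial : ℝ)))) := by
  have hcard : ∀ n : ℕ,
      (Finset.univ.filter
          fun q : (Fin (2 * p) → Bool) × (Fin (2 * p) → Fin (n / 2)) =>
            ((n : ℤ) ∣ ∑ k : Fin (2 * p),
                (if q.1 k then 1 else -1) * (((q.2 k : ℕ) : ℤ) + 1)) ∧
            ∀ k : Fin (2 * p),
              (Finset.univ.filter fun l : Fin (2 * p) =>
                q.2 l = q.2 k ∧ q.1 l = true).card = 1 ∧
              (Finset.univ.filter fun l : Fin (2 * p) =>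
                q.2 l = q.2 k ∧ q.1 l = false).card = 1).card
        = (n / 2).choose p * (2 * p).factorial := by
    intro n
    rw [Finset.filter_congr (q := Matched p (n / 2)) (fun q _ => ⟨fun h => h.2,
      fun h => ⟨by rw [matched_sum_zero h]; exact dvd_zero _, h⟩⟩)]
    exact card_matched p (n / 2)
  have hfun : ∀ n : ℕ, n ≥ 1 →
      ((((n / 2).choose p * (2 * p).factorial : ℕ) : ℝ) / (n : ℝ) ^ p)
        = (((2 * p).factorial : ℝ) / (p.factorial : ℝ)) *
            ∏ i ∈ Finset.range p, ((n / 2 - i : ℕ) : ℝ) / (n : ℝ) := by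
    intro n hn
    have hn0 : (n : ℝ) ≠ 0 := by positivity
    have hp0 : ((p.factorial : ℕ) : ℝ) ≠ 0 := by
      exact_mod_cast p.factorial_ne_zero
    have hprod : (∏ i ∈ Finset.range p, ((n / 2 - i : ℕ) : ℝ))
        = (p.factorial : ℝ) * ((n / 2).choose p : ℝ) := by
      rw [← Nat.cast_prod]
      exact_mod_cast congrArg (Nat.cast (R := ℝ))
        ((Nat.descFactorial_eq_prod_range (n / 2) p).symm.trans
          (Nat.descFactorial_eq_factorial_mul_choose (n / 2) p))
    rw [Finset.prod_div_distrib, Finset.prod_const, Finset.card_range, hprod]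
    push_cast
    field_simp
  have hlim : Filter.Tendsto
      (fun n : ℕ => (((2 * p).factorial : ℝ) / (p.factorial : ℝ)) *
        ∏ i ∈ Finset.range p, ((n / 2 - i : ℕ) : ℝ) / (n : ℝ))
      Filter.atTop
      (nhds (((2 * p).factorial : ℝ) / (2 ^ p * (p.factorial : ℝ)))) := by
    have := Filter.Tendsto.const_mul (b := (((2 * p).factorial : ℝ) / (p.factorial : ℝ)))
      (tendsto_finset_prod (f := fun i (n : ℕ) => ((n / 2 - i : ℕ) : ℝ) / (n : ℝ))
        (a := fun _ => (1 / 2 : ℝ)) (Finset.range p)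
        (fun i _ => tendsto_sub_div i))
    convert this using 2
    rw [Finset.prod_const, Finset.card_range]
    rw [div_pow, one_pow, div_mul_div_comm, mul_one, mul_comm ((p.factorial : ℕ) : ℝ) (2 ^ p)]
  apply hlim.congr'
  filter_upwards [Filter.eventually_ge_atTop 1] with n hn
  rw [hcard n, ← hfun n hn]
end

section
/- Let C_{2p}^{(2)} ⊂ C_{2p} consist of tuples in which every value appears at least twice, and U_{2p} ⊂ C_{2p}^{(2)} consist of the opposite sign pair matched tuples. Then |C_{2p}^{(2)} \ U_{2p}| = O(n^{p-1}) while |U_{2p}| = O(n^p). -/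
open scoped Classical

namespace CardC2Aux

open Finset

noncomputable def pat {N m : ℕ} (j : Fin N → Fin m) (k : Fin N) : Fin N :=
  (Finset.univ.filter fun l => j l = j k).min' ⟨k, by simp⟩

lemma pat_spec {N m : ℕ} (j : Fin N → Fin m) (k : Fin N) : j (pat j k) = j k := by
  have h := (Finset.univ.filter fun l => j l = j k).min'_mem ⟨k, by simp⟩
  exact (Finset.mem_filter.mp h).2

lemma pat_le {N m : ℕ} {j : Fin N → Fin m} {k l : Fin N} (h : j l = j k) : pat j k ≤ l :=
  Finset.min'_le _ _ (by simp [h])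

lemma pat_eq_of_eq {N m : ℕ} {j : Fin N → Fin m} {k l : Fin N} (h : j l = j k) :
    pat j l = pat j k :=
  le_antisymm (pat_le ((pat_spec j k).trans h.symm)) (pat_le ((pat_spec j l).trans h))

lemma pat_eq_iff {N m : ℕ} {j : Fin N → Fin m} {k l : Fin N} :
    pat j l = pat j k ↔ j l = j k := by
  constructor
  · intro h
    calc j l = j (pat j l) := (pat_spec j l).symm
      _ = j (pat j k) := by rw [h]
      _ = j k := pat_spec j k
  · exact pat_eq_of_eq

lemma pat_idem {N m : ℕ} (j : Fin N → Fin m) (k : Fin N) : pat j (pat j k) = pat j k :=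
  pat_eq_of_eq (pat_spec j k)

lemma card_le_of_agree_on {N m : ℕ} (hm : 0 < m) (F : Finset (Fin N → Fin m)) (K : Finset (Fin N))
    (hinj : ∀ j ∈ F, ∀ j' ∈ F, (∀ k ∈ K, j k = j' k) → j = j') :
    F.card ≤ m ^ K.card := by
  classical
  set z : Fin m := ⟨0, hm⟩ with hz
  set r : (Fin N → Fin m) → (Fin N → Fin m) := fun j k => if k ∈ K then j k else z with hr
  have hinj' : Set.InjOn r F := by
    intro a ha b hb hab
    refine hinj a ha b hb fun k hk => ?_
    have := congrFun hab k
    simpa [hr, hk] using this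
  have h1 : F.card = (F.image r).card := (Finset.card_image_of_injOn hinj').symm
  have h2 : F.image r ⊆
      Fintype.piFinset (fun k => if k ∈ K then (Finset.univ : Finset (Fin m)) else {z}) := by
    intro f hf
    rcases Finset.mem_image.mp hf with ⟨j, _, rfl⟩
    rw [Fintype.mem_piFinset]
    intro k
    by_cases hk : k ∈ K <;> simp [hr, hk]
  have h3 : (Fintype.piFinset
      (fun k : Fin N => if k ∈ K then (Finset.univ : Finset (Fin m)) else {z})).card
      = m ^ K.card := by
    rw [Fintype.card_piFinset]
    have he : ∀ k : Fin N,
        ((if k ∈ K then (Finset.univ : Finset (Fin m)) else {z}).card) =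
          if k ∈ K then m else 1 := by
      intro k; by_cases hk : k ∈ K <;> simp [hk]
    rw [Finset.prod_congr rfl (fun k _ => he k), Finset.prod_ite_mem, Finset.univ_inter,
      Finset.prod_const]
  rw [h1, ← h3]
  exact Finset.card_le_card h2

lemma global_bound {N m e : ℕ} (A : Finset (Fin N → Fin m))
    (h : ∀ P : Fin N → Fin N, (A.filter fun j => pat j = P).card ≤ m ^ e) :
    A.card ≤ (Fintype.card (Fin N → Fin N)) * m ^ e := by
  classical
  rw [Finset.card_eq_sum_card_fiberwise (f := pat) (t := Finset.univ)
    (fun j _ => Finset.mem_univ _)]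
  calc ∑ P ∈ Finset.univ, (A.filter fun j => pat j = P).card
      ≤ ∑ P ∈ (Finset.univ : Finset (Fin N → Fin N)), m ^ e :=
        Finset.sum_le_sum fun P _ => h P
    _ = (Fintype.card (Fin N → Fin N)) * m ^ e := by
        rw [Finset.sum_const, smul_eq_mul, Finset.card_univ]

lemma fiber_core {N m : ℕ} (hm : 0 < m) (F : Finset (Fin N → Fin m)) (P : Fin N → Fin N)
    (hF : ∀ j ∈ F, pat j = P) :
    F.card ≤ m ^ (Finset.univ.filter fun k => P k = k).card := by
  apply card_le_of_agree_on hm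
  intro j hj j' hj' hag
  funext k
  have h1 : j (P k) = j k := by rw [← hF j hj]; exact pat_spec j k
  have h1' : j' (P k) = j' k := by rw [← hF j' hj']; exact pat_spec j' k
  have h2 : P k ∈ Finset.univ.filter fun k => P k = k := by
    simp only [Finset.mem_filter, Finset.mem_univ, true_and]
    rw [← hF j hj]; exact pat_idem j k
  rw [← h1, ← h1', hag _ h2]

lemma fiber_core_refined {N m n : ℕ} (hm : 0 < m) (h2m : 2 * m ≤ n)
    (ε : Fin N → Bool) (F : Finset (Fin N → Fin m)) (P : Fin N → Fin N)
    (hF : ∀ j ∈ F, pat j = P)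
    (hdvd : ∀ j ∈ F, (n : ℤ) ∣ ∑ k, (if ε k then (1:ℤ) else -1) * (((j k : ℕ) : ℤ) + 1))
    (k0 a b : Fin N) (ha : P a = k0) (hb : P b = k0) (hab : a ≠ b)
    (hclass : ∀ l, P l = k0 → l = a ∨ l = b) (hsign : ε a = ε b) :
    F.card ≤ m ^ ((Finset.univ.filter fun k => P k = k).erase k0).card := by
  apply card_le_of_agree_on hm
  intro j hj j' hj' hag
  have hjP : ∀ k, j (P k) = j k := fun k => by rw [← hF j hj]; exact pat_spec j k
  have hj'P : ∀ k, j' (P k) = j' k := fun k => by rw [← hF j' hj']; exact pat_spec j' k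
  have hkey : ∀ k, P k ≠ k0 → j k = j' k := by
    intro k hk
    have hrep : P k ∈ (Finset.univ.filter fun k => P k = k).erase k0 := by
      simp only [Finset.mem_erase, Finset.mem_filter, Finset.mem_univ, true_and]
      refine ⟨hk, ?_⟩
      rw [← hF j hj]; exact pat_idem j k
    rw [← hjP k, ← hj'P k, hag _ hrep]
  have hcl : ∀ k, P k = k0 → j k = j k0 ∧ j' k = j' k0 := by
    intro k hk
    constructor
    · rw [← hjP k, hk]
    · rw [← hj'P k, hk]
  have hS := dvd_sub (hdvd j hj) (hdvd j' hj')
  set σ : Fin N → ℤ := fun k => if ε k then (1:ℤ) else -1 with hσ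
  have hexp : (∑ k, σ k * (((j k : ℕ) : ℤ) + 1)) - (∑ k, σ k * (((j' k : ℕ) : ℤ) + 1))
      = ∑ k, σ k * (((j k : ℕ) : ℤ) - ((j' k : ℕ) : ℤ)) := by
    rw [← Finset.sum_sub_distrib]
    exact Finset.sum_congr rfl fun k _ => by ring
  rw [hexp] at hS
  have hzero : ∀ k ∈ (Finset.univ : Finset (Fin N)), k ∉ ({a, b} : Finset (Fin N)) →
      σ k * (((j k : ℕ) : ℤ) - ((j' k : ℕ) : ℤ)) = 0 := by
    intro k _ hk
    simp only [Finset.mem_insert, Finset.mem_singleton] at hk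
    push_neg at hk
    have hne : P k ≠ k0 := by
      intro h
      rcases hclass k h with h' | h'
      · exact hk.1 h'
      · exact hk.2 h'
    rw [hkey k hne]; ring
  have hsum2 : ∑ k, σ k * (((j k : ℕ) : ℤ) - ((j' k : ℕ) : ℤ))
      = ∑ k ∈ ({a, b} : Finset (Fin N)), σ k * (((j k : ℕ) : ℤ) - ((j' k : ℕ) : ℤ)) :=
    (Finset.sum_subset (Finset.subset_univ _) hzero).symm
  set Δ : ℤ := ((j k0 : ℕ) : ℤ) - ((j' k0 : ℕ) : ℤ) with hΔ
  have hja := hcl a ha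
  have hjb := hcl b hb
  have hpair : ∑ k ∈ ({a, b} : Finset (Fin N)), σ k * (((j k : ℕ) : ℤ) - ((j' k : ℕ) : ℤ))
      = σ a * Δ + σ b * Δ := by
    rw [Finset.sum_pair hab, hja.1, hja.2, hjb.1, hjb.2]
  have hσab : σ a = σ b := by simp only [hσ, hsign]
  have hdvd2 : (n : ℤ) ∣ σ a * (σ a * Δ + σ b * Δ) :=
    Dvd.dvd.mul_left (by rw [hsum2, hpair] at hS; exact hS) _
  have hσsq : σ a * (σ a * Δ + σ b * Δ) = 2 * Δ := by
    rw [← hσab]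
    cases hε : ε a <;> simp only [hσ, hε, Bool.false_eq_true, if_false, if_true] <;> ring
  rw [hσsq] at hdvd2
  have habs : |2 * Δ| < n := by
    have h1 : ((j k0 : ℕ) : ℤ) < m := by exact_mod_cast (j k0).isLt
    have h2 : ((j' k0 : ℕ) : ℤ) < m := by exact_mod_cast (j' k0).isLt
    have h3 : 0 ≤ ((j k0 : ℕ) : ℤ) := Int.natCast_nonneg _
    have h4 : 0 ≤ ((j' k0 : ℕ) : ℤ) := Int.natCast_nonneg _
    have h5 : (2 * m : ℤ) ≤ n := by exact_mod_cast h2m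
    have h6 : (1 : ℤ) ≤ m := by exact_mod_cast hm
    rw [abs_lt, hΔ]
    constructor <;> linarith
  have hΔ0 : 2 * Δ = 0 := Int.eq_zero_of_abs_lt_dvd hdvd2 habs
  have hk0eq : j k0 = j' k0 := by
    have : ((j k0 : ℕ) : ℤ) = ((j' k0 : ℕ) : ℤ) := by omega
    exact Fin.ext (by exact_mod_cast this)
  funext k
  by_cases hk : P k = k0
  · rw [(hcl k hk).1, (hcl k hk).2, hk0eq]
  · exact hkey k hk

section Fibers

variable {n p : ℕ}

lemma common_facts (hp : 0 < p) (ε : Fin (2*p) → Bool) {m : ℕ}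
    (j₀ : Fin (2*p) → Fin m) (P : Fin (2*p) → Fin (2*p)) (hP : pat j₀ = P) :
    (∀ k, P (P k) = P k) ∧
    (∀ k0, P k0 = k0 →
      (Finset.univ.filter fun l => P l = k0) = (Finset.univ.filter fun l => j₀ l = j₀ k0)) ∧
    (∑ k0 ∈ Finset.univ.filter fun k => P k = k,
        (Finset.univ.filter fun l => P l = k0).card = 2 * p) := by
  have hPP : ∀ k, P (P k) = P k := fun k => by rw [← hP]; exact pat_idem j₀ k
  refine ⟨hPP, ?_, ?_⟩
  · intro k0 h
    ext l
    simp only [Finset.mem_filter, Finset.mem_univ, true_and]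
    constructor
    · intro hl
      have h1 : pat j₀ l = pat j₀ k0 := by rw [hP, hl]; exact h.symm
      exact pat_eq_iff.mp h1
    · intro hl
      have h1 := pat_eq_of_eq hl
      rw [hP] at h1
      exact h1.trans h
  · have h1 := Finset.card_eq_sum_card_fiberwise
      (s := (Finset.univ : Finset (Fin (2*p)))) (t := Finset.univ.filter fun k => P k = k)
      (f := P) (fun l _ => by
        simp only [Finset.mem_coe, Finset.mem_filter, Finset.mem_univ, true_and]; exact hPP l)
    rw [← h1]
    simp

lemma matched_class_card (ε : Fin (2*p) → Bool) {m : ℕ}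
    (j₀ : Fin (2*p) → Fin m) (k : Fin (2*p))
    (h1 : (Finset.univ.filter fun l => j₀ l = j₀ k ∧ ε l = true).card = 1)
    (h2 : (Finset.univ.filter fun l => j₀ l = j₀ k ∧ ε l = false).card = 1) :
    (Finset.univ.filter fun l => j₀ l = j₀ k).card = 2 := by
  have hsplit := Finset.card_filter_add_card_filter_not
    (s := Finset.univ.filter fun l => j₀ l = j₀ k) (p := fun l => ε l = true)
  rw [Finset.filter_filter] at hsplit
  have hneg : ((Finset.univ.filter fun l => j₀ l = j₀ k).filter fun l => ¬ (ε l = true))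
      = Finset.univ.filter fun l => j₀ l = j₀ k ∧ ε l = false := by
    rw [Finset.filter_filter]
    apply Finset.filter_congr
    intro l _
    simp [Bool.not_eq_true]
  rw [hneg, h1, h2] at hsplit
  omega

lemma fiber_matched_bound (hp : 0 < p) (hm : 0 < n / 2) (ε : Fin (2*p) → Bool)
    (P : Fin (2*p) → Fin (2*p)) :
    ((Finset.univ.filter fun j : Fin (2*p) → Fin (n/2) =>
        ((n : ℤ) ∣ ∑ k : Fin (2*p), (if ε k then 1 else -1) * (((j k : ℕ) : ℤ) + 1)) ∧
        (∀ k : Fin (2*p),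
          (Finset.univ.filter fun l : Fin (2*p) => j l = j k ∧ ε l = true).card = 1 ∧
          (Finset.univ.filter fun l : Fin (2*p) => j l = j k ∧ ε l = false).card = 1)).filter
      fun j => pat j = P).card ≤ (n/2) ^ p := by
  set F := (Finset.univ.filter fun j : Fin (2*p) → Fin (n/2) =>
        ((n : ℤ) ∣ ∑ k : Fin (2*p), (if ε k then 1 else -1) * (((j k : ℕ) : ℤ) + 1)) ∧
        (∀ k : Fin (2*p),
          (Finset.univ.filter fun l : Fin (2*p) => j l = j k ∧ ε l = true).card = 1 ∧
          (Finset.univ.filter fun l : Fin (2*p) => j l = j k ∧ ε l = false).card = 1)).filter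
      (fun j => pat j = P) with hFdef
  rcases F.eq_empty_or_nonempty with hF | ⟨j₀, hj₀⟩
  · rw [hF]; simp
  have hP : pat j₀ = P := (Finset.mem_filter.mp hj₀).2
  obtain ⟨hdvd₀, hmat⟩ := (Finset.mem_filter.mp (Finset.mem_filter.mp hj₀).1).2
  obtain ⟨hPP, hclass_eq, hsum⟩ := common_facts hp ε j₀ P hP
  set Rep := Finset.univ.filter fun k => P k = k with hRep
  have hall2 : ∀ k0 ∈ Rep, (Finset.univ.filter fun l => P l = k0).card = 2 := by
    intro k0 hk0
    have hk0' : P k0 = k0 := (Finset.mem_filter.mp hk0).2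
    rw [hclass_eq k0 hk0']
    exact matched_class_card ε j₀ k0 (hmat k0).1 (hmat k0).2
  have hRepcard : Rep.card = p := by
    rw [Finset.sum_congr rfl hall2, Finset.sum_const, smul_eq_mul] at hsum
    omega
  have hb := fiber_core hm F P (fun j hj => (Finset.mem_filter.mp hj).2)
  rw [← hRep] at hb
  rwa [hRepcard] at hb

lemma fiber_bad_bound (hp : 0 < p) (hm : 0 < n / 2) (ε : Fin (2*p) → Bool)
    (P : Fin (2*p) → Fin (2*p)) :
    ((Finset.univ.filter fun j : Fin (2*p) → Fin (n/2) =>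
        ((n : ℤ) ∣ ∑ k : Fin (2*p), (if ε k then 1 else -1) * (((j k : ℕ) : ℤ) + 1)) ∧
        (∀ k : Fin (2*p),
          2 ≤ (Finset.univ.filter fun l : Fin (2*p) => j l = j k).card) ∧
        ¬ (∀ k : Fin (2*p),
          (Finset.univ.filter fun l : Fin (2*p) => j l = j k ∧ ε l = true).card = 1 ∧
          (Finset.univ.filter fun l : Fin (2*p) => j l = j k ∧ ε l = false).card = 1)).filter
      fun j => pat j = P).card ≤ (n/2) ^ (p - 1) := by
  set F := (Finset.univ.filter fun j : Fin (2*p) → Fin (n/2) =>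
        ((n : ℤ) ∣ ∑ k : Fin (2*p), (if ε k then 1 else -1) * (((j k : ℕ) : ℤ) + 1)) ∧
        (∀ k : Fin (2*p),
          2 ≤ (Finset.univ.filter fun l : Fin (2*p) => j l = j k).card) ∧
        ¬ (∀ k : Fin (2*p),
          (Finset.univ.filter fun l : Fin (2*p) => j l = j k ∧ ε l = true).card = 1 ∧
          (Finset.univ.filter fun l : Fin (2*p) => j l = j k ∧ ε l = false).card = 1)).filter
      (fun j => pat j = P) with hFdef
  rcases F.eq_empty_or_nonempty with hF | ⟨j₀, hj₀⟩
  · rw [hF]; simp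
  have hFP : ∀ j ∈ F, pat j = P := fun j hj => (Finset.mem_filter.mp hj).2
  have hP : pat j₀ = P := hFP j₀ hj₀
  obtain ⟨hdvd₀, hge2, hnm⟩ := (Finset.mem_filter.mp (Finset.mem_filter.mp hj₀).1).2
  obtain ⟨hPP, hclass_eq, hsum⟩ := common_facts hp ε j₀ P hP
  set Rep := Finset.univ.filter fun k => P k = k with hRep
  have hge : ∀ k0 ∈ Rep, 2 ≤ (Finset.univ.filter fun l => P l = k0).card := by
    intro k0 hk0
    rw [hclass_eq k0 (Finset.mem_filter.mp hk0).2]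
    exact hge2 k0
  have hd : Rep.card ≤ p := by
    have h1 := Finset.card_nsmul_le_sum Rep _ 2 hge
    rw [hsum, smul_eq_mul] at h1
    omega
  rcases lt_or_eq_of_le hd with hlt | heq
  · have hb := fiber_core hm F P hFP
    rw [← hRep] at hb
    exact hb.trans (Nat.pow_le_pow_right hm (by omega))
  -- Rep.card = p : every class has exactly two elements
  have hall2 : ∀ k0 ∈ Rep, (Finset.univ.filter fun l => P l = k0).card = 2 := by
    intro k0 hk0
    by_contra hne
    have h3 : 3 ≤ (Finset.univ.filter fun l => P l = k0).card := by
      have := hge k0 hk0; omega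
    have hrest := Finset.card_nsmul_le_sum (Rep.erase k0) _ 2
      (fun k1 hk1 => hge k1 (Finset.mem_of_mem_erase hk1))
    have hadd : (Finset.univ.filter fun l => P l = k0).card
        + ∑ k1 ∈ Rep.erase k0, (Finset.univ.filter fun l => P l = k1).card = 2 * p := by
      rw [Finset.add_sum_erase _ (fun k1 => (Finset.univ.filter fun l => P l = k1).card) hk0]; exact hsum
    rw [Finset.card_erase_of_mem hk0, heq, smul_eq_mul] at hrest
    omega
  obtain ⟨k, hk⟩ := not_forall.mp hnm
  set k0 := P k with hk0def
  have hk0Rep : k0 ∈ Rep := by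
    simp only [hRep, Finset.mem_filter, Finset.mem_univ, true_and]
    exact hPP k
  have hC2 : (Finset.univ.filter fun l => P l = k0).card = 2 := hall2 k0 hk0Rep
  obtain ⟨a, b, hab, hCab⟩ := Finset.card_eq_two.mp hC2
  have haC : a ∈ Finset.univ.filter fun l => P l = k0 := by
    rw [hCab]; exact Finset.mem_insert_self _ _
  have hbC : b ∈ Finset.univ.filter fun l => P l = k0 := by
    rw [hCab]; exact Finset.mem_insert_of_mem (Finset.mem_singleton_self _)
  have ha : P a = k0 := (Finset.mem_filter.mp haC).2
  have hb' : P b = k0 := (Finset.mem_filter.mp hbC).2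
  have hclassab : ∀ l, P l = k0 → l = a ∨ l = b := by
    intro l hl
    have hmem : l ∈ Finset.univ.filter fun l => P l = k0 :=
      Finset.mem_filter.mpr ⟨Finset.mem_univ _, hl⟩
    rw [hCab] at hmem
    simpa using hmem
  have hj0k : j₀ k0 = j₀ k := by rw [hk0def, ← hP]; exact pat_spec j₀ k
  have hfilt : (Finset.univ.filter fun l => P l = k0)
      = Finset.univ.filter fun l => j₀ l = j₀ k := by
    rw [hclass_eq k0 (hPP k)]
    ext l
    simp [hj0k]
  have htf : ∀ c : Bool, (Finset.univ.filter fun l => j₀ l = j₀ k ∧ ε l = c)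
      = ({a, b} : Finset (Fin (2*p))).filter fun l => ε l = c := by
    intro c
    rw [← Finset.filter_filter, ← hfilt, hCab]
  have hsign : ε a = ε b := by
    cases hεa : ε a <;> cases hεb : ε b
    · rfl
    · exfalso
      apply hk
      constructor
      · rw [htf true]
        rw [show ({a, b} : Finset (Fin (2*p))).filter (fun l => ε l = true) = {b} by
          ext x
          simp only [Finset.mem_filter, Finset.mem_insert, Finset.mem_singleton]
          constructor
          · rintro ⟨hx | hx, hc⟩
            · rw [hx] at hc; rw [hεa] at hc; exact absurd hc (by simp)
            · exact hx
          · rintro rfl; exact ⟨Or.inr rfl, hεb⟩]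
        simp
      · rw [htf false]
        rw [show ({a, b} : Finset (Fin (2*p))).filter (fun l => ε l = false) = {a} by
          ext x
          simp only [Finset.mem_filter, Finset.mem_insert, Finset.mem_singleton]
          constructor
          · rintro ⟨hx | hx, hc⟩
            · exact hx
            · rw [hx] at hc; rw [hεb] at hc; exact absurd hc (by simp)
          · rintro rfl; exact ⟨Or.inl rfl, hεa⟩]
        simp
    · exfalso
      apply hk
      constructor
      · rw [htf true]
        rw [show ({a, b} : Finset (Fin (2*p))).filter (fun l => ε l = true) = {a} by
          ext x
          simp only [Finset.mem_filter, Finset.mem_insert, Finset.mem_singleton]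
          constructor
          · rintro ⟨hx | hx, hc⟩
            · exact hx
            · rw [hx] at hc; rw [hεb] at hc; exact absurd hc (by simp)
          · rintro rfl; exact ⟨Or.inl rfl, hεa⟩]
        simp
      · rw [htf false]
        rw [show ({a, b} : Finset (Fin (2*p))).filter (fun l => ε l = false) = {b} by
          ext x
          simp only [Finset.mem_filter, Finset.mem_insert, Finset.mem_singleton]
          constructor
          · rintro ⟨hx | hx, hc⟩
            · rw [hx] at hc; rw [hεa] at hc; exact absurd hc (by simp)
            · exact hx
          · rintro rfl; exact ⟨Or.inr rfl, hεb⟩]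
        simp
    · rfl
  have hdvdF : ∀ j ∈ F, (n : ℤ) ∣ ∑ k : Fin (2*p),
      (if ε k then (1:ℤ) else -1) * (((j k : ℕ) : ℤ) + 1) :=
    fun j hj => (Finset.mem_filter.mp (Finset.mem_filter.mp hj).1).2.1
  have h2m : 2 * (n / 2) ≤ n := by omega
  have hfinal := fiber_core_refined hm h2m ε F P hFP hdvdF k0 a b ha hb' hab hclassab hsign
  rw [← hRep, Finset.card_erase_of_mem hk0Rep, heq] at hfinal
  exact hfinal

end Fibers

end CardC2Aux


open CardC2Aux in
/-- For a fixed choice of signs, the tuples in `C_{2p}` in which every value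
appears at least twice but which are not opposite sign pair matched number
`O(n^{p-1})`, while the opposite sign pair matched ones number `O(n^p)`. -/
theorem card_C2_asymptotics (p : ℕ) (ε : Fin (2 * p) → Bool) :
    ∃ C : ℝ, ∀ n : ℕ,
      (((Finset.univ.filter fun j : Fin (2 * p) → Fin (n / 2) =>
          ((n : ℤ) ∣ ∑ k : Fin (2 * p),
              (if ε k then 1 else -1) * (((j k : ℕ) : ℤ) + 1)) ∧
          (∀ k : Fin (2 * p),
            2 ≤ (Finset.univ.filter fun l : Fin (2 * p) => j l = j k).card) ∧
          ¬ (∀ k : Fin (2 * p),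
            (Finset.univ.filter fun l : Fin (2 * p) =>
              j l = j k ∧ ε l = true).card = 1 ∧
            (Finset.univ.filter fun l : Fin (2 * p) =>
              j l = j k ∧ ε l = false).card = 1)).card : ℝ)
        ≤ C * (n : ℝ) ^ (p - 1)) ∧
      (((Finset.univ.filter fun j : Fin (2 * p) → Fin (n / 2) =>
          ((n : ℤ) ∣ ∑ k : Fin (2 * p),
              (if ε k then 1 else -1) * (((j k : ℕ) : ℤ) + 1)) ∧
          (∀ k : Fin (2 * p),
            (Finset.univ.filter fun l : Fin (2 * p) =>
              j l = j k ∧ ε l = true).card = 1 ∧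
            (Finset.univ.filter fun l : Fin (2 * p) =>
              j l = j k ∧ ε l = false).card = 1)).card : ℝ)
        ≤ C * (n : ℝ) ^ p) := by
  rcases Nat.eq_zero_or_pos p with hp0 | hp
  · subst hp0
    refine ⟨1, fun n => ?_⟩
    constructor
    · have h0 : (Finset.univ.filter fun j : Fin (2 * 0) → Fin (n / 2) =>
          ((n : ℤ) ∣ ∑ k : Fin (2 * 0),
              (if ε k then 1 else -1) * (((j k : ℕ) : ℤ) + 1)) ∧
          (∀ k : Fin (2 * 0),
            2 ≤ (Finset.univ.filter fun l : Fin (2 * 0) => j l = j k).card) ∧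
          ¬ (∀ k : Fin (2 * 0),
            (Finset.univ.filter fun l : Fin (2 * 0) =>
              j l = j k ∧ ε l = true).card = 1 ∧
            (Finset.univ.filter fun l : Fin (2 * 0) =>
              j l = j k ∧ ε l = false).card = 1)) = ∅ := by
        apply Finset.filter_eq_empty_iff.mpr
        rintro j - ⟨-, -, h3⟩
        exact h3 fun k => k.elim0
      rw [h0]
      norm_num
    · have hle := Finset.card_filter_le (Finset.univ : Finset (Fin (2 * 0) → Fin (n / 2)))
        (fun j =>
          ((n : ℤ) ∣ ∑ k : Fin (2 * 0),
              (if ε k then 1 else -1) * (((j k : ℕ) : ℤ) + 1)) ∧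
          (∀ k : Fin (2 * 0),
            (Finset.univ.filter fun l : Fin (2 * 0) =>
              j l = j k ∧ ε l = true).card = 1 ∧
            (Finset.univ.filter fun l : Fin (2 * 0) =>
              j l = j k ∧ ε l = false).card = 1))
      have hcard : (Finset.univ : Finset (Fin (2 * 0) → Fin (n / 2))).card = 1 := by
        rw [Finset.card_univ]
        simp
      rw [hcard] at hle
      have h1 : (1:ℝ) * (n:ℝ) ^ (0:ℕ) = 1 := by simp
      rw [h1]
      exact_mod_cast hle
  · refine ⟨(((2 * p) ^ (2 * p) : ℕ) : ℝ), fun n => ?_⟩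
    by_cases hm : n / 2 = 0
    · haveI h1 : IsEmpty (Fin (n / 2)) := by rw [hm]; infer_instance
      haveI h2 : Nonempty (Fin (2 * p)) := ⟨⟨0, by omega⟩⟩
      have hcard0 : ∀ S : Finset (Fin (2 * p) → Fin (n / 2)), (S.card : ℝ) = 0 := by
        intro S
        rw [Finset.eq_empty_of_isEmpty S]
        simp
      constructor <;> (rw [hcard0]; positivity)
    · have hm1 : 0 < n / 2 := Nat.pos_of_ne_zero hm
      constructor
      · have hnat := global_bound _ (fun P => fiber_bad_bound hp hm1 ε P)
        have hcardfun : Fintype.card (Fin (2 * p) → Fin (2 * p)) = (2 * p) ^ (2 * p) := by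
          simp
        rw [hcardfun] at hnat
        refine le_trans (Nat.cast_le.mpr hnat) ?_
        push_cast
        gcongr
        exact_mod_cast Nat.div_le_self n 2
      · have hnat := global_bound _ (fun P => fiber_matched_bound hp hm1 ε P)
        have hcardfun : Fintype.card (Fin (2 * p) → Fin (2 * p)) = (2 * p) ^ (2 * p) := by
          simp
        rw [hcardfun] at hnat
        refine le_trans (Nat.cast_le.mpr hnat) ?_
        push_cast
        gcongr
        exact_mod_cast Nat.div_le_self n 2
end
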